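/- arXiv:1202.1195 — 2 statements merged into one kernel-verified Lean document; each statement's English description precedes it below -/
import Mathlib

section
/- Let M and N be ω-saturated Θ-models and suppose every Θ-formula that is a standard translation of an intuitionistic formula true at (M, a, b̄ₙ) is also true at (N, c, d̄ₙ). Then the relation A defined by (a'; b̄'_l) A (c'; d̄'_l) iff every Θ-formula that is a standard translation of an intuitionistic formula true at (α, a', b̄'_l) is true at (β, c', d̄'_l) (for α, β ∈ {M, N}) is an ⟨(M,a,b̄ₙ),(N,c,d̄ₙ)⟩-asimulation. -/
namespace IPC

/-- The classical vocabulary Σ: binary R, binary E, and for each intuitionistic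
`n`-ary predicate letter indexed by `m` a classical `(n+1)`-ary letter `P n m`. -/
inductive Sym : Type
  | R : Sym
  | E : Sym
  | P : ℕ → ℕ → Sym
  deriving DecidableEq

def Sym.arity : Sym → ℕ
  | .R => 2
  | .E => 2
  | .P n _ => n + 1

theorem Sym.arity_pos (s : Sym) : 0 < s.arity := by
  cases s <;> simp [Sym.arity]

/-- A first-order model for the vocabulary Σ. -/
structure Model : Type 1 where
  D : Type
  ne : Nonempty D
  rel : ∀ s : Sym, (Fin s.arity → D) → Prop

/-- First-order formulas (with identity) over Σ; variables are natural numbers. -/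
inductive Fml : Type
  | atom (s : Sym) (args : Fin s.arity → ℕ)
  | eq (v w : ℕ)
  | fls
  | neg (φ : Fml)
  | conj (φ ψ : Fml)
  | disj (φ ψ : Fml)
  | impl (φ ψ : Fml)
  | all (v : ℕ) (φ : Fml)
  | ex (v : ℕ) (φ : Fml)

/-- Tarskian satisfaction relative to a variable assignment. -/
def Fml.eval (M : Model) : Fml → (ℕ → M.D) → Prop
  | .atom s args, f => M.rel s (fun i => f (args i))
  | .eq v w, f => f v = f w
  | .fls, _ => False
  | .neg φ, f => ¬ φ.eval M f
  | .conj φ ψ, f => φ.eval M f ∧ ψ.eval M f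
  | .disj φ ψ, f => φ.eval M f ∨ ψ.eval M f
  | .impl φ ψ, f => φ.eval M f → ψ.eval M f
  | .all v φ, f => ∀ d : M.D, φ.eval M (Function.update f v d)
  | .ex v φ, f => ∃ d : M.D, φ.eval M (Function.update f v d)

/-- Degree: maximal nesting of quantifiers. -/
def Fml.deg : Fml → ℕ
  | .atom _ _ => 0
  | .eq _ _ => 0
  | .fls => 0
  | .neg φ => φ.deg
  | .conj φ ψ => max φ.deg ψ.deg
  | .disj φ ψ => max φ.deg ψ.deg
  | .impl φ ψ => max φ.deg ψ.deg
  | .all _ φ => φ.deg + 1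
  | .ex _ φ => φ.deg + 1

/-- Free variables. -/
def Fml.free : Fml → Finset ℕ
  | .atom _ args => Finset.univ.image args
  | .eq v w => {v, w}
  | .fls => ∅
  | .neg φ => φ.free
  | .conj φ ψ => φ.free ∪ ψ.free
  | .disj φ ψ => φ.free ∪ ψ.free
  | .impl φ ψ => φ.free ∪ ψ.free
  | .all v φ => φ.free.erase v
  | .ex v φ => φ.free.erase v

/-- All variables occurring (free or bound). -/
def Fml.vars : Fml → Finset ℕ
  | .atom _ args => Finset.univ.image args
  | .eq v w => {v, w}
  | .fls => ∅
  | .neg φ => φ.vars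
  | .conj φ ψ => φ.vars ∪ ψ.vars
  | .disj φ ψ => φ.vars ∪ ψ.vars
  | .impl φ ψ => φ.vars ∪ ψ.vars
  | .all v φ => insert v φ.vars
  | .ex v φ => insert v φ.vars

/-- Predicate symbols occurring in a formula. -/
def Fml.syms : Fml → Finset Sym
  | .atom s _ => {s}
  | .eq _ _ => ∅
  | .fls => ∅
  | .neg φ => φ.syms
  | .conj φ ψ => φ.syms ∪ ψ.syms
  | .disj φ ψ => φ.syms ∪ ψ.syms
  | .impl φ ψ => φ.syms ∪ ψ.syms
  | .all _ φ => φ.syms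
  | .ex _ φ => φ.syms

/-- Σ_φ : the symbols of φ together with R and E. -/
def sigOf (φ : Fml) : Finset Sym := φ.syms ∪ {Sym.R, Sym.E}

/-- Logical equivalence. -/
def FmlEquiv (φ ψ : Fml) : Prop :=
  ∀ (M : Model) (f : ℕ → M.D), φ.eval M f ↔ ψ.eval M f

/-- Logical consequence between single formulas. -/
def EntailsF (φ ψ : Fml) : Prop :=
  ∀ (M : Model) (f : ℕ → M.D), φ.eval M f → ψ.eval M f

/-- Logical consequence from a set of formulas. -/
def EntailsSet (Γ : Set Fml) (φ : Fml) : Prop :=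
  ∀ (M : Model) (f : ℕ → M.D), (∀ ψ ∈ Γ, ψ.eval M f) → φ.eval M f

def Satisfiable (φ : Fml) : Prop := ∃ (M : Model) (f : ℕ → M.D), φ.eval M f

/-- Intuitionistic predicate formulas (without identity); an `n`-ary letter
indexed by `m` takes `n` object variables. -/
inductive IFml : Type
  | atom (n m : ℕ) (args : Fin n → ℕ)
  | fls
  | conj (i j : IFml)
  | disj (i j : IFml)
  | impl (i j : IFml)
  | all (v : ℕ) (i : IFml)
  | ex (v : ℕ) (i : IFml)

/-- Standard x-translation.  Object variables `v` of intuitionistic formulas are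
represented as the even classical variables `2*v`; world variables are odd, and
a fresh world variable for a binder under world variable `x` is `x+2`. -/
def ST : IFml → ℕ → Fml
  | .atom n m args, x => .atom (.P n m) (Fin.cons x (fun i => 2 * args i))
  | .fls, x => .neg (.eq x x)
  | .conj i j, x => .conj (ST i x) (ST j x)
  | .disj i j, x => .disj (ST i x) (ST j x)
  | .impl i j, x =>
      .all (x + 2) (.impl (.atom .R ![x, x + 2]) (.impl (ST i (x + 2)) (ST j (x + 2))))
  | .ex w i, x => .ex (2 * w) (.conj (.atom .E ![x, 2 * w]) (ST i x))
  | .all w i, x =>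
      .all (x + 2) (.all (2 * w)
        (.impl (.conj (.atom .R ![x, x + 2]) (.atom .E ![x + 2, 2 * w])) (ST i (x + 2))))

/-- `ψ` is a standard x-translation (with x the fixed variable 1). -/
def IsSTF (ψ : Fml) : Prop := ∃ i : IFml, ψ = ST i 1

/-- Truth of `φ(x, w̄ₙ)` at the n-ary evaluation point `(M, a, b̄ₙ)`:
true under every assignment sending `x` (variable 1) to `a` and `wᵢ`
(variable `2*i`) to `bᵢ`. -/
def Sat (M : Model) (a : M.D) (bs : List M.D) (φ : Fml) : Prop :=
  ∀ f : ℕ → M.D, f 1 = a → (∀ i : Fin bs.length, f (2 * i.val) = bs.get i) → φ.eval M f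

/-- Free variables of φ are among x, w₁, …, wₙ. -/
def FreeOK (n : ℕ) (φ : Fml) : Prop :=
  ∀ v ∈ φ.free, v = 1 ∨ ∃ i < n, v = 2 * i

def relR (α : Model) (a b : α.D) : Prop := α.rel .R ![a, b]
def relE (α : Model) (a b : α.D) : Prop := α.rel .E ![a, b]

/-- Truth of the atom `P(x, w̄_l)` at `(α, a, ō_l)`. -/
def atomSat (α : Model) (P : Sym) (a : α.D) (os : List α.D) : Prop :=
  ∃ h : P.arity = os.length + 1, α.rel P (fun i => (a :: os).get (Fin.cast h i))

/-- The model named by a side: `true ↦ M`, `false ↦ N`. -/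
def side (M N : Model) : Bool → Model
  | true => M
  | false => N

/-- `⟨(M,a,b̄ₙ),(N,c,d̄ₙ)⟩_k`-asimulation conditions (without the condition on the
distinguished points).  The relation `A` relates tuples `(w̄_m, a'; ō_l)` over one
of the two models to similar tuples over one of the two models. -/
structure IsKAsim (Θ : Set Sym) (M N : Model) (n k : ℕ)
    (A : ∀ s t : Bool, List (side M N s).D → (side M N s).D → List (side M N s).D →
          List (side M N t).D → (side M N t).D → List (side M N t).D → Prop) : Prop where
  lengths : ∀ s t ws a' os ws' c' os', A s t ws a' os ws' c' os' →
      ws.length = ws'.length ∧ os.length = os'.length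
  atoms : ∀ s t ws a' os ws' c' os', A s t ws a' os ws' c' os' →
      ∀ P ∈ Θ, P ≠ Sym.R → P ≠ Sym.E →
        atomSat (side M N s) P a' os → atomSat (side M N t) P c' os'
  back : ∀ s t ws a' os ws' c' os', A s t ws a' os ws' c' os' →
      ws.length + os.length < n + k →
      ∀ c'', relR (side M N t) c' c'' →
        ∃ a'', relR (side M N s) a' a'' ∧
          A t s (ws' ++ [c']) c'' os' (ws ++ [a']) a'' os ∧
          A s t (ws ++ [a']) a'' os (ws' ++ [c']) c'' os'
  exi : ∀ s t ws a' os ws' c' os', A s t ws a' os ws' c' os' →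
      ws.length + os.length < n + k →
      ∀ b'', relE (side M N s) a' b'' →
        ∃ d'', relE (side M N t) c' d'' ∧
          A s t ws a' (os ++ [b'']) ws' c' (os' ++ [d''])
  uni : ∀ s t ws a' os ws' c' os', A s t ws a' os ws' c' os' →
      ws.length + os.length + 1 < n + k →
      ∀ c'' d'', relR (side M N t) c' c'' → relE (side M N t) c'' d'' →
        ∃ a'' b'', relR (side M N s) a' a'' ∧ relE (side M N s) a'' b'' ∧
          A s t (ws ++ [a']) a'' (os ++ [b'']) (ws' ++ [c']) c'' (os' ++ [d''])

/-- (Unparametrized) asimulation conditions. -/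
structure IsAsim (Θ : Set Sym) (M N : Model)
    (A : ∀ s t : Bool, (side M N s).D → List (side M N s).D →
          (side M N t).D → List (side M N t).D → Prop) : Prop where
  lengths : ∀ s t a' os c' os', A s t a' os c' os' → os.length = os'.length
  atoms : ∀ s t a' os c' os', A s t a' os c' os' →
      ∀ P ∈ Θ, P ≠ Sym.R → P ≠ Sym.E →
        atomSat (side M N s) P a' os → atomSat (side M N t) P c' os'
  back : ∀ s t a' os c' os', A s t a' os c' os' →
      ∀ c'', relR (side M N t) c' c'' →
        ∃ a'', relR (side M N s) a' a'' ∧ A t s c'' os' a'' os ∧ A s t a'' os c'' os'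
  exi : ∀ s t a' os c' os', A s t a' os c' os' →
      ∀ b'', relE (side M N s) a' b'' →
        ∃ d'', relE (side M N t) c' d'' ∧ A s t a' (os ++ [b'']) c' (os' ++ [d''])
  uni : ∀ s t a' os c' os', A s t a' os c' os' →
      ∀ c'' d'', relR (side M N t) c' c'' → relE (side M N t) c'' d'' →
        ∃ a'' b'', relR (side M N s) a' a'' ∧ relE (side M N s) a'' b'' ∧
          A s t a'' (os ++ [b'']) c'' (os' ++ [d''])

/-- Invariance with respect to k-asimulations (for formulas `φ(x, w̄ₙ)`). -/
def KInvariant (φ : Fml) (n k : ℕ) : Prop :=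
  ∀ (Θ : Set Sym), ↑(sigOf φ) ⊆ Θ →
    ∀ (M N : Model) (a : M.D) (bs : List M.D) (c : N.D) (ds : List N.D),
      bs.length = n → ds.length = n →
      (∃ A, IsKAsim Θ M N n k A ∧ A true false [] a bs [] c ds) →
      Sat M a bs φ → Sat N c ds φ

/-- Invariance with respect to asimulations. -/
def AsimInvariant (φ : Fml) (n : ℕ) : Prop :=
  ∀ (Θ : Set Sym), ↑(sigOf φ) ⊆ Θ →
    ∀ (M N : Model) (a : M.D) (bs : List M.D) (c : N.D) (ds : List N.D),
      bs.length = n → ds.length = n →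
      (∃ A, IsAsim Θ M N A ∧ A true false a bs c ds) →
      Sat M a bs φ → Sat N c ds φ

def conjList : List Fml → Fml
  | [] => .neg .fls
  | φ :: l => .conj φ (conjList l)

def disjList : List Fml → Fml
  | [] => .fls
  | φ :: l => .disj φ (disjList l)

/-- A `(Σ_φ, (x, w̄ₙ), k)`-formula that is a standard x-translation. -/
def GoodFml (φ : Fml) (n k : ℕ) (ψ : Fml) : Prop :=
  ψ.syms ⊆ sigOf φ ∧ FreeOK n ψ ∧ ψ.deg ≤ k ∧ IsSTF ψ

/-- A complete `(φ, (x, w̄ₙ), k)`-conjunction, given by its list of conjuncts. -/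
def CompleteConj (φ : Fml) (n k : ℕ) (L : List Fml) : Prop :=
  (∀ ψ ∈ L, GoodFml φ n k ψ) ∧
  ∃ (M : Model) (a : M.D) (bs : List M.D), bs.length = n ∧
    Sat M a bs (conjList L) ∧ Sat M a bs φ ∧
    ∀ ψ : Fml, GoodFml φ n k ψ → Sat M a bs ψ → EntailsF (conjList L) ψ

/-- All Θ-formulas that are standard x-translations of intuitionistic formulas
true at `(α, a, ōₗ)` are true at `(β, c, d̄ₗ)`. -/
def ITLe (Θ : Set Sym) (α : Model) (a : α.D) (os : List α.D)
    (β : Model) (c : β.D) (ds : List β.D) : Prop :=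
  ∀ i : IFml, ↑(ST i 1).syms ⊆ Θ → FreeOK os.length (ST i 1) →
    Sat α a os (ST i 1) → Sat β c ds (ST i 1)

/-- ω-saturation: every type over finitely many parameters (the values of the
assignment `f` on the finite set `W`) in finitely many variables (`V`) that is
finitely satisfiable in `M` is realized in `M`. -/
def OmegaSaturated (M : Model) : Prop :=
  ∀ (f : ℕ → M.D) (V W : Finset ℕ) (Γ : Set Fml),
    (∀ ψ ∈ Γ, ↑ψ.free ⊆ (↑(V ∪ W) : Set ℕ)) →
    (∀ Γ' : Finset Fml, ↑Γ' ⊆ Γ →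
      ∃ g : ℕ → M.D, (∀ v ∉ V, g v = f v) ∧ ∀ ψ ∈ Γ', ψ.eval M g) →
    ∃ g : ℕ → M.D, (∀ v ∉ V, g v = f v) ∧ ∀ ψ ∈ Γ, ψ.eval M g

/-- The intuitionistic consequences of φ: Σ_φ-formulas in the variables
x, w̄ₙ that are standard x-translations and follow from φ. -/
def IC (φ : Fml) (n : ℕ) : Set Fml :=
  {ψ | ψ.syms ⊆ sigOf φ ∧ FreeOK n ψ ∧ IsSTF ψ ∧ EntailsF φ ψ}

/-! K-relative notions. -/

def KSatisfiable (K : Set Model) (Γ : Set Fml) : Prop :=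
  ∃ M ∈ K, ∃ f : ℕ → M.D, ∀ ψ ∈ Γ, ψ.eval M f

def KEntails (K : Set Model) (φ ψ : Fml) : Prop := ¬ KSatisfiable K {φ, ψ.neg}

def KEquiv (K : Set Model) (φ ψ : Fml) : Prop := KEntails K φ ψ ∧ KEntails K ψ φ

def KAsimInvariant (K : Set Model) (φ : Fml) (n : ℕ) : Prop :=
  ∀ (Θ : Set Sym), ↑(sigOf φ) ⊆ Θ →
    ∀ (M N : Model), M ∈ K → N ∈ K →
      ∀ (a : M.D) (bs : List M.D) (c : N.D) (ds : List N.D),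
        bs.length = n → ds.length = n →
        (∃ A, IsAsim Θ M N A ∧ A true false a bs c ds) →
        Sat M a bs φ → Sat N c ds φ

end IPC

/-!
Standard translations express the Kripke semantics `IFml.Holds`, so `ITLe` says that every
intuitionistic formula (over `Θ`, in the current object variables) forced at the left point is
forced at the right one. Each back-and-forth clause asks for a successor realizing a possibly
infinite type: all formulas forced at the given successor on one side, and the negations of all
formulas not forced there. Finitely many of them combine into a single intuitionistic formula,
`∃ w, ⋀ φᵢ`, `∀ y ∀ w, ⋁ ψⱼ` or `⋀ φᵢ → ⋁ ψⱼ`, whose truth transfers along the inclusion of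
theories; this gives finite satisfiability, and ω-saturation realizes the whole type.
-/

namespace IPC

open Function

namespace IFml

def freeVars : IFml → Finset ℕ
  | .atom _ _ args => Finset.univ.image args
  | .fls => ∅
  | .conj i j | .disj i j | .impl i j => i.freeVars ∪ j.freeVars
  | .all w i | .ex w i => i.freeVars.erase w

/-- Kripke semantics at world `a` under the object environment `e`. -/
def Holds (α : Model) : IFml → α.D → (ℕ → α.D) → Prop
  | .atom n m args, a, e => α.rel (.P n m) (Fin.cons a (e ∘ args))
  | .fls, _, _ => False
  | .conj i j, a, e => i.Holds α a e ∧ j.Holds α a e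
  | .disj i j, a, e => i.Holds α a e ∨ j.Holds α a e
  | .impl i j, a, e => ∀ b, relR α a b → i.Holds α b e → j.Holds α b e
  | .ex w i, a, e => ∃ d, relE α a d ∧ i.Holds α a (update e w d)
  | .all w i, a, e => ∀ b d, relR α a b → relE α b d → i.Holds α b (update e w d)

theorem holds_congr {α : Model} (i : IFml) {a : α.D} {e e' : ℕ → α.D}
    (h : ∀ k ∈ i.freeVars, e k = e' k) : i.Holds α a e ↔ i.Holds α a e' := by
  induction i generalizing a e e' with
  | atom n m args =>
    have : e ∘ args = e' ∘ args := funext fun k => h _ (by simp [freeVars])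
    simp only [Holds, this]
  | fls => rfl
  | conj i j ihi ihj | disj i j ihi ihj | impl i j ihi ihj =>
    simp only [freeVars, Finset.mem_union] at h
    simp only [Holds, ihi fun k hk => h k (.inl hk), ihj fun k hk => h k (.inr hk)]
  | all w i ih | ex w i ih =>
    have key : ∀ b d, i.Holds α b (update e w d) ↔ i.Holds α b (update e' w d) := fun b d =>
      ih fun k hk => by
        by_cases hkw : k = w
        · simp [hkw]
        · simpa [hkw] using h k (Finset.mem_erase.2 ⟨hkw, hk⟩)
    simp only [Holds, key]

end IFml

theorem rel_R_comp_iff (α : Model) (f : ℕ → α.D) (u v : ℕ) :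
    (α.rel .R fun k : Fin Sym.R.arity => f (![u, v] k)) ↔ relR α (f u) (f v) :=
  iff_of_eq (congrArg (α.rel .R) (funext fun k => by fin_cases k <;> rfl))

theorem rel_E_comp_iff (α : Model) (f : ℕ → α.D) (u v : ℕ) :
    (α.rel .E fun k : Fin Sym.E.arity => f (![u, v] k)) ↔ relE α (f u) (f v) :=
  iff_of_eq (congrArg (α.rel .E) (funext fun k => by fin_cases k <;> rfl))

theorem univ_image_R (u v : ℕ) : Finset.univ.image (α := Fin Sym.R.arity) ![u, v] = {u, v} := by
  change Finset.univ.image (![u, v] : Fin 2 → ℕ) = {u, v}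
  ext w; simp [Fin.exists_fin_two, eq_comm]

theorem univ_image_E (u v : ℕ) : Finset.univ.image (α := Fin Sym.E.arity) ![u, v] = {u, v} := by
  change Finset.univ.image (![u, v] : Fin 2 → ℕ) = {u, v}
  ext w; simp [Fin.exists_fin_two, eq_comm]

theorem free_ST (i : IFml) {x : ℕ} (hx : x % 2 = 1) :
    (ST i x).free = insert x (i.freeVars.image (2 * ·)) := by
  induction i generalizing x with
  | atom n m args =>
    change Finset.univ.image (Fin.cons x (fun k => 2 * args k) : Fin (n + 1) → ℕ) = _
    ext v; simp [Fin.exists_fin_succ, IFml.freeVars, eq_comm]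
  | fls => simp [ST, Fml.free, IFml.freeVars]
  | _ =>
    ext v
    simp [ST, Fml.free, IFml.freeVars, univ_image_R, univ_image_E, *]
    grind

theorem syms_ST (i : IFml) (x : ℕ) : (ST i x).syms = (ST i 1).syms := by
  induction i generalizing x with
  | atom | fls => rfl
  | conj i j ihi ihj | disj i j ihi ihj | impl i j ihi ihj =>
    simp only [ST, Fml.syms, ihi (x + 2), ihi x, ihj (x + 2), ihj x, ihi 3, ihj 3]
  | all w i ih | ex w i ih => simp only [ST, Fml.syms, ih (x + 2), ih x, ih 3]

theorem update_odd_two_mul {D : Type} (f : ℕ → D) {x : ℕ} (hx : x % 2 = 1) (d : D) :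
    (fun k => update f x d (2 * k)) = fun k => f (2 * k) :=
  funext fun k => update_of_ne (by omega) d f

theorem update_two_mul {D : Type} (f : ℕ → D) (w : ℕ) (d : D) :
    (fun k => update f (2 * w) d (2 * k)) = update (fun k => f (2 * k)) w d :=
  update_comp_eq_of_injective f (fun _ _ => Nat.eq_of_mul_eq_mul_left two_pos) w d

theorem eval_ST_iff_holds {α : Model} (i : IFml) {x : ℕ} (hx : x % 2 = 1) (f : ℕ → α.D) :
    (ST i x).eval α f ↔ i.Holds α (f x) (fun k => f (2 * k)) := by
  induction i generalizing x f with
  | atom n m args => exact iff_of_eq (congrArg (α.rel (.P n m)) (Fin.comp_cons f x _))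
  | fls => simp [ST, Fml.eval, IFml.Holds]
  | conj i j ihi ihj | disj i j ihi ihj => simp only [ST, Fml.eval, IFml.Holds, ihi hx, ihj hx]
  | impl i j ihi ihj =>
    have hx2 : (x + 2) % 2 = 1 := by omega
    simp only [ST, Fml.eval, IFml.Holds, ihi hx2, ihj hx2, rel_R_comp_iff, update_self,
      update_of_ne (show x ≠ x + 2 by omega), update_odd_two_mul f hx2]
  | all w i ih =>
    have hx2 : (x + 2) % 2 = 1 := by omega
    simp only [ST, Fml.eval, IFml.Holds, ih hx2, rel_R_comp_iff, rel_E_comp_iff, update_self,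
      update_of_ne (show x ≠ x + 2 by omega), update_of_ne (show x ≠ 2 * w by omega),
      update_of_ne (show x + 2 ≠ 2 * w by omega), update_two_mul, update_odd_two_mul f hx2, and_imp]
  | ex w i ih =>
    simp only [ST, Fml.eval, IFml.Holds, ih hx, rel_E_comp_iff, update_self,
      update_of_ne (show x ≠ 2 * w by omega), update_two_mul]

namespace IFml

def conjList (L : List IFml) : IFml := L.foldr conj (impl fls fls)

def disjList (L : List IFml) : IFml := L.foldr disj fls

theorem holds_conjList {α : Model} (L : List IFml) (a : α.D) (e : ℕ → α.D) :
    (conjList L).Holds α a e ↔ ∀ i ∈ L, i.Holds α a e := by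
  induction L with
  | nil => simp [conjList, Holds]
  | cons i L ih => simp [conjList, Holds, ← ih]

theorem holds_disjList {α : Model} (L : List IFml) (a : α.D) (e : ℕ → α.D) :
    (disjList L).Holds α a e ↔ ∃ i ∈ L, i.Holds α a e := by
  induction L with
  | nil => simp [disjList, Holds]
  | cons i L ih => simp [disjList, Holds, ← ih]

def IsOver (Θ : Set Sym) (n : ℕ) (i : IFml) : Prop :=
  ↑(ST i 1).syms ⊆ Θ ∧ ∀ k ∈ i.freeVars, k < n

variable {Θ : Set Sym} {n : ℕ} {i j : IFml}

theorem IsOver.conj (hi : i.IsOver Θ n) (hj : j.IsOver Θ n) : (conj i j).IsOver Θ n := by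
  simp_all [IsOver, ST, Fml.syms, freeVars, Set.union_subset_iff, or_imp]

theorem IsOver.disj (hi : i.IsOver Θ n) (hj : j.IsOver Θ n) : (disj i j).IsOver Θ n := by
  simp_all [IsOver, ST, Fml.syms, freeVars, Set.union_subset_iff, or_imp]

theorem IsOver.impl (hR : Sym.R ∈ Θ) (hi : i.IsOver Θ n) (hj : j.IsOver Θ n) :
    (impl i j).IsOver Θ n := by
  simp_all [IsOver, ST, Fml.syms, freeVars, Set.insert_subset_iff, syms_ST, or_imp]

theorem IsOver.ex (hE : Sym.E ∈ Θ) (hi : i.IsOver Θ (n + 1)) : (ex n i).IsOver Θ n := by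
  refine ⟨by simp_all [IsOver, ST, Fml.syms, Set.insert_subset_iff], fun k hk => ?_⟩
  simp only [freeVars, Finset.mem_erase] at hk
  have := hi.2 k hk.2
  omega

theorem IsOver.all (hR : Sym.R ∈ Θ) (hE : Sym.E ∈ Θ) (hi : i.IsOver Θ (n + 1)) :
    (all n i).IsOver Θ n := by
  refine ⟨by simp_all [IsOver, ST, Fml.syms, Set.insert_subset_iff, syms_ST], fun k hk => ?_⟩
  simp only [freeVars, Finset.mem_erase] at hk
  have := hi.2 k hk.2
  omega

theorem isOver_conjList (hR : Sym.R ∈ Θ) {L : List IFml} (h : ∀ i ∈ L, i.IsOver Θ n) :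
    (conjList L).IsOver Θ n := by
  induction L with
  | nil =>
    have hfls : fls.IsOver Θ n := ⟨by simp [ST, Fml.syms], by simp [freeVars]⟩
    exact .impl hR hfls hfls
  | cons i L ih => exact .conj (h i (by simp)) (ih fun j hj => h j (by simp [hj]))

theorem isOver_disjList {L : List IFml} (h : ∀ i ∈ L, i.IsOver Θ n) : (disjList L).IsOver Θ n := by
  induction L with
  | nil => exact ⟨by simp [disjList, ST, Fml.syms], by simp [disjList, freeVars]⟩
  | cons i L ih => exact .disj (h i (by simp)) (ih fun j hj => h j (by simp [hj]))

end IFml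

def asgOf {D : Type} (a : D) (e : ℕ → D) : ℕ → D := update (fun v => e (v / 2)) 1 a

theorem asgOf_one {D : Type} (a : D) (e : ℕ → D) : asgOf a e 1 = a := update_self ..

theorem asgOf_two_mul {D : Type} (a : D) (e : ℕ → D) (k : ℕ) : asgOf a e (2 * k) = e k := by
  rw [asgOf, update_of_ne (by omega)]
  simp

theorem comp_two_mul_eq_update {D : Type} {g : ℕ → D} {a : D} {e : ℕ → D} {V : Finset ℕ}
    {n : ℕ} (hg : ∀ v ∉ V, g v = asgOf a e v) (hV : ∀ k ≠ n, 2 * k ∉ V) :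
    (fun k => g (2 * k)) = update e n (g (2 * n)) := by
  funext k
  rcases eq_or_ne k n with rfl | hk
  · simp
  · rw [update_of_ne hk, hg _ (hV k hk), asgOf_two_mul]

theorem sat_ST_iff {α : Model} {a : α.D} {os : List α.D} {i : IFml}
    (hi : ∀ k ∈ i.freeVars, k < os.length) (x₀ : α.D) :
    Sat α a os (ST i 1) ↔ i.Holds α a (os.getD · x₀) := by
  constructor
  · intro h
    have := h (asgOf a (os.getD · x₀)) (asgOf_one ..) fun k => by simp [asgOf_two_mul]
    simpa only [eval_ST_iff_holds i (x := 1) rfl, asgOf_one, asgOf_two_mul] using this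
  · intro h f hf1 hf2
    rw [eval_ST_iff_holds i (x := 1) rfl, hf1]
    refine (IFml.holds_congr i fun k hk => ?_).2 h
    have hk := hi k hk
    simpa [hk] using hf2 ⟨k, hk⟩

theorem freeOK_ST_iff {n : ℕ} {i : IFml} : FreeOK n (ST i 1) ↔ ∀ k ∈ i.freeVars, k < n := by
  simp only [FreeOK, free_ST i (show 1 % 2 = 1 by rfl), Finset.mem_insert, Finset.mem_image]
  constructor
  · intro h k hk
    obtain h | ⟨j, hj, hjk⟩ := h (2 * k) (.inr ⟨k, hk, rfl⟩) <;> omega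
  · rintro h v (rfl | ⟨k, hk, rfl⟩)
    exacts [.inl rfl, .inr ⟨k, h k hk, rfl⟩]

def HoldsLe (Θ : Set Sym) (n : ℕ) (α : Model) (a : α.D) (e : ℕ → α.D)
    (β : Model) (c : β.D) (e' : ℕ → β.D) : Prop :=
  ∀ i : IFml, i.IsOver Θ n → i.Holds α a e → i.Holds β c e'

theorem itLe_iff_holdsLe {Θ : Set Sym} {α β : Model} {a : α.D} {os : List α.D} {c : β.D}
    {ds : List β.D} {n : ℕ} (hos : os.length = n) (hds : ds.length = n) (x₀ : α.D) (y₀ : β.D) :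
    ITLe Θ α a os β c ds ↔ HoldsLe Θ n α a (os.getD · x₀) β c (ds.getD · y₀) := by
  subst hos
  refine forall_congr' fun i => ?_
  simp only [IFml.IsOver, freeOK_ST_iff, and_imp]
  refine imp_congr_right fun _ => forall_congr' fun hi => ?_
  rw [sat_ST_iff hi x₀, sat_ST_iff (hds ▸ hi) y₀]

theorem getD_append_singleton {D : Type} (l : List D) (b d : D) :
    (fun k => (l ++ [b]).getD k d) = update (fun k => l.getD k d) l.length b := by
  funext k
  rcases lt_trichotomy k l.length with h | rfl | h
  · simp [update_of_ne h.ne, List.getElem?_append_left h]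
  · simp
  · have : (l ++ [b]).length ≤ k := by simpa using h
    simp [update_of_ne h.ne', List.getElem?_eq_none this, List.getElem?_eq_none h.le]

def Realizes (α : Model) (g : ℕ → α.D) (x : ℕ) (Δ : Set Fml) (Pos Neg : Set IFml) : Prop :=
  (∀ ψ ∈ Δ, ψ.eval α g) ∧ (∀ i ∈ Pos, i.Holds α (g x) (fun k => g (2 * k))) ∧
    ∀ i ∈ Neg, ¬ i.Holds α (g x) (fun k => g (2 * k))

theorem OmegaSaturated.exists_realizes {α : Model} (hα : OmegaSaturated α) (f : ℕ → α.D)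
    (V : Finset ℕ) {x N : ℕ} (hx : x % 2 = 1) (hxN : x < N) {Δ : Set Fml} {Pos Neg : Set IFml}
    (hΔ : ∀ ψ ∈ Δ, ∀ v ∈ ψ.free, v < N) (hPN : ∀ i ∈ Pos ∪ Neg, ∀ k ∈ i.freeVars, 2 * k < N)
    (hfin : ∀ s t : Finset IFml, ↑s ⊆ Pos → ↑t ⊆ Neg →
      ∃ g, (∀ v ∉ V, g v = f v) ∧ Realizes α g x Δ s t) :
    ∃ g, (∀ v ∉ V, g v = f v) ∧ Realizes α g x Δ Pos Neg := by
  classical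
  let pos (i : IFml) : Fml := ST i x
  let neg (i : IFml) : Fml := (ST i x).neg
  have hfree : ∀ ψ ∈ Δ ∪ pos '' Pos ∪ neg '' Neg, ↑ψ.free ⊆ (↑(V ∪ Finset.range N) : Set ℕ) := by
    have hST : ∀ i ∈ Pos ∪ Neg, ∀ v ∈ (ST i x).free, v < N := fun i hi v hv => by
      simp only [free_ST i hx, Finset.mem_insert, Finset.mem_image] at hv
      obtain rfl | ⟨k, hk, rfl⟩ := hv
      exacts [hxN, hPN i hi k hk]
    rintro ψ ((hψ | ⟨i, hi, rfl⟩) | ⟨i, hi, rfl⟩) v hv <;>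
      simp only [Finset.coe_union, Finset.coe_range, Set.mem_union, Set.mem_Iio]
    exacts [.inr (hΔ ψ hψ v hv), .inr (hST i (.inl hi) v hv), .inr (hST i (.inr hi) v hv)]
  obtain ⟨g, hgf, hg⟩ := hα f V (Finset.range N) _ hfree fun Γ hΓ => by
    obtain ⟨s, hsPos, hs⟩ := Finset.subset_set_image_iff.1
      (fun ψ hψ => (Finset.mem_filter.1 hψ).2 : ↑(Γ.filter (· ∈ pos '' Pos)) ⊆ pos '' Pos)
    obtain ⟨t, htNeg, ht⟩ := Finset.subset_set_image_iff.1
      (fun ψ hψ => (Finset.mem_filter.1 hψ).2 : ↑(Γ.filter (· ∈ neg '' Neg)) ⊆ neg '' Neg)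
    obtain ⟨g, hgf, hgΔ, hgs, hgt⟩ := hfin s t hsPos htNeg
    refine ⟨g, hgf, fun ψ hψ => ?_⟩
    rcases hΓ hψ with (hψΔ | hψPos) | hψNeg
    · exact hgΔ ψ hψΔ
    · obtain ⟨i, hi, rfl⟩ := Finset.mem_image.1 (hs ▸ Finset.mem_filter.2 ⟨hψ, hψPos⟩)
      exact (eval_ST_iff_holds i hx g).2 (hgs i hi)
    · obtain ⟨i, hi, rfl⟩ := Finset.mem_image.1 (ht ▸ Finset.mem_filter.2 ⟨hψ, hψNeg⟩)
      exact mt (eval_ST_iff_holds i hx g).1 (hgt i hi)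
  exact ⟨g, hgf, fun ψ hψ => hg ψ (.inl (.inl hψ)),
    fun i hi => (eval_ST_iff_holds i hx g).1 (hg _ (.inl (.inr ⟨i, hi, rfl⟩))),
    fun i hi => mt (eval_ST_iff_holds i hx g).2 (hg _ (.inr ⟨i, hi, rfl⟩))⟩

namespace HoldsLe

variable {Θ : Set Sym} {n : ℕ} {α β : Model} {a : α.D} {e : ℕ → α.D} {c : β.D} {e' : ℕ → β.D}

theorem exists_relE (hR : Sym.R ∈ Θ) (hE : Sym.E ∈ Θ) (hβ : OmegaSaturated β)
    (h : HoldsLe Θ n α a e β c e') {b : α.D} (hb : relE α a b) :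
    ∃ d, relE β c d ∧ HoldsLe Θ (n + 1) α a (update e n b) β c (update e' n d) := by
  let Pos := {i : IFml | i.IsOver Θ (n + 1) ∧ i.Holds α a (update e n b)}
  let Δ : Set Fml := {.atom .E ![1, 2 * n]}
  have hfin : ∀ s t : Finset IFml, ↑s ⊆ Pos → ↑t ⊆ (∅ : Set IFml) → ∃ g : ℕ → β.D,
      (∀ v ∉ ({2 * n} : Finset ℕ), g v = asgOf c e' v) ∧ Realizes β g 1 Δ s t := by
    rintro s t hs ht
    have hχ : (IFml.ex n (IFml.conjList s.toList)).IsOver Θ n :=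
      .ex hE (IFml.isOver_conjList hR fun i hi => (hs (Finset.mem_toList.1 hi)).1)
    obtain ⟨d, hd, hds⟩ := h _ hχ
      ⟨b, hb, (IFml.holds_conjList ..).2 fun i hi => (hs (Finset.mem_toList.1 hi)).2⟩
    have hf1 : update (asgOf c e') (2 * n) d 1 = c := by rw [update_of_ne (by omega), asgOf_one]
    have hf2 : (fun k => update (asgOf c e') (2 * n) d (2 * k)) = update e' n d := by
      simp only [update_two_mul, asgOf_two_mul]
    refine ⟨update (asgOf c e') (2 * n) d, fun v hv => update_of_ne (by simpa using hv) .., ?_, ?_,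
      fun i hi => absurd (ht hi) (Set.notMem_empty i)⟩
    · rintro _ rfl
      exact (rel_E_comp_iff β _ 1 (2 * n)).2 (by simpa [hf1] using hd)
    · intro i hi
      rw [hf1, hf2]
      exact (IFml.holds_conjList ..).1 hds i (by simpa using hi)
  obtain ⟨g, hgf, hgE, hgPos, -⟩ := hβ.exists_realizes (asgOf c e') {2 * n} (x := 1)
    (N := 2 * n + 2) rfl (by omega) (by simp [Δ, Fml.free, univ_image_E])
    (fun i hi k hk => by have := (hi.resolve_right (Set.notMem_empty i)).1.2 k hk; omega) hfin
  have hg1 : g 1 = c := by rw [hgf 1 (by simp; omega), asgOf_one]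
  have hg2 := comp_two_mul_eq_update (n := n) hgf fun k hk => by simp; omega
  refine ⟨g (2 * n), ?_, fun i hi hia => ?_⟩
  · simpa [hg1] using (rel_E_comp_iff β g 1 (2 * n)).1 (hgE _ rfl)
  · simpa [hg1, hg2] using hgPos i ⟨hi, hia⟩

theorem exists_relR_relE (hR : Sym.R ∈ Θ) (hE : Sym.E ∈ Θ) (hα : OmegaSaturated α)
    (h : HoldsLe Θ n α a e β c e') {c₁ d₁ : β.D} (hc : relR β c c₁) (hd : relE β c₁ d₁) :
    ∃ a₁ b₁, relR α a a₁ ∧ relE α a₁ b₁ ∧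
      HoldsLe Θ (n + 1) α a₁ (update e n b₁) β c₁ (update e' n d₁) := by
  let Neg := {i : IFml | i.IsOver Θ (n + 1) ∧ ¬ i.Holds β c₁ (update e' n d₁)}
  let Δ : Set Fml := {.atom .R ![1, 3], .atom .E ![3, 2 * n]}
  have hfin : ∀ s t : Finset IFml, ↑s ⊆ (∅ : Set IFml) → ↑t ⊆ Neg → ∃ g : ℕ → α.D,
      (∀ v ∉ ({3, 2 * n} : Finset ℕ), g v = asgOf a e v) ∧ Realizes α g 3 Δ s t := by
    rintro s t hs ht
    have hχ : (IFml.all n (IFml.disjList t.toList)).IsOver Θ n :=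
      .all hR hE (IFml.isOver_disjList fun i hi => (ht (Finset.mem_toList.1 hi)).1)
    have hβχ : ¬ (IFml.all n (IFml.disjList t.toList)).Holds β c e' := fun hχ => by
      obtain ⟨i, hi, hi₁⟩ := (IFml.holds_disjList ..).1 (hχ c₁ d₁ hc hd)
      exact (ht (Finset.mem_toList.1 hi)).2 hi₁
    have hαχ := mt (h _ hχ) hβχ
    simp only [IFml.Holds, IFml.holds_disjList, not_forall, not_exists, not_and] at hαχ
    obtain ⟨a₁, b₁, ha₁, hb₁, hnot⟩ := hαχ
    let g := update (update (asgOf a e) 3 a₁) (2 * n) b₁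
    have hg1 : g 1 = a := by simp [g, update_of_ne (show 1 ≠ 2 * n by omega), asgOf_one]
    have hg3 : g 3 = a₁ := by simp [g, update_of_ne (show 3 ≠ 2 * n by omega)]
    have hg2 : (fun k => g (2 * k)) = update e n b₁ := by
      simp only [g, update_two_mul, update_odd_two_mul _ (show 3 % 2 = 1 by rfl), asgOf_two_mul]
    refine ⟨g, fun v hv => ?_, ?_, fun i hi => absurd (hs hi) (Set.notMem_empty i), ?_⟩
    · simp only [Finset.mem_insert, Finset.mem_singleton, not_or] at hv
      simp [g, update_of_ne hv.1, update_of_ne hv.2]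
    · rintro _ (rfl | rfl)
      · exact (rel_R_comp_iff α g 1 3).2 (by rwa [hg1, hg3])
      · have hg2n : g (2 * n) = b₁ := update_self ..
        exact (rel_E_comp_iff α g 3 (2 * n)).2 (by rwa [hg3, hg2n])
    · intro i hi
      rw [hg3, hg2]
      exact hnot i (by simpa using hi)
  obtain ⟨g, hgf, hgΔ, -, hgNeg⟩ := hα.exists_realizes (asgOf a e) {3, 2 * n} (x := 3)
    (N := 2 * n + 4) rfl (by omega) (by simp [Δ, Fml.free, univ_image_R, univ_image_E])
    (fun i hi k hk => by have := (hi.resolve_left (Set.notMem_empty i)).1.2 k hk; omega) hfin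
  have hg1 : g 1 = a := by rw [hgf 1 (by simp; omega), asgOf_one]
  have hg2 := comp_two_mul_eq_update (n := n) hgf fun k hk => by simp; omega
  refine ⟨g 3, g (2 * n), ?_, ?_, fun i hi hia => ?_⟩
  · simpa [hg1] using (rel_R_comp_iff α g 1 3).1 (hgΔ _ (.inl rfl))
  · exact (rel_E_comp_iff α g 3 (2 * n)).1 (hgΔ _ (.inr rfl))
  · by_contra hi₁
    exact hgNeg i ⟨hi, hi₁⟩ (by rwa [hg2])

theorem exists_relR (hR : Sym.R ∈ Θ) (hα : OmegaSaturated α)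
    (h : HoldsLe Θ n α a e β c e') {c₁ : β.D} (hc : relR β c c₁) :
    ∃ a₁, relR α a a₁ ∧ HoldsLe Θ n β c₁ e' α a₁ e ∧ HoldsLe Θ n α a₁ e β c₁ e' := by
  let Pos := {i : IFml | i.IsOver Θ n ∧ i.Holds β c₁ e'}
  let Neg := {i : IFml | i.IsOver Θ n ∧ ¬ i.Holds β c₁ e'}
  let Δ : Set Fml := {.atom .R ![1, 3]}
  have hfin : ∀ s t : Finset IFml, ↑s ⊆ Pos → ↑t ⊆ Neg → ∃ g : ℕ → α.D,
      (∀ v ∉ ({3} : Finset ℕ), g v = asgOf a e v) ∧ Realizes α g 3 Δ s t := by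
    rintro s t hs ht
    have hχ : (IFml.impl (IFml.conjList s.toList) (IFml.disjList t.toList)).IsOver Θ n :=
      .impl hR (IFml.isOver_conjList hR fun i hi => (hs (Finset.mem_toList.1 hi)).1)
        (IFml.isOver_disjList fun i hi => (ht (Finset.mem_toList.1 hi)).1)
    have hβχ : ¬ (IFml.impl (IFml.conjList s.toList) (IFml.disjList t.toList)).Holds β c e' :=
      fun hχ => by
        obtain ⟨i, hi, hi₁⟩ := (IFml.holds_disjList ..).1 <| hχ c₁ hc <|
          (IFml.holds_conjList ..).2 fun i hi => (hs (Finset.mem_toList.1 hi)).2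
        exact (ht (Finset.mem_toList.1 hi)).2 hi₁
    have hαχ := mt (h _ hχ) hβχ
    simp only [IFml.Holds, IFml.holds_conjList, IFml.holds_disjList, not_forall, not_exists,
      not_and] at hαχ
    obtain ⟨a₁, ha₁, hpos, hneg⟩ := hαχ
    let g := update (asgOf a e) 3 a₁
    have hg3 : g 3 = a₁ := update_self ..
    have hg2 : (fun k => g (2 * k)) = e := by
      simp only [g, update_odd_two_mul _ (show 3 % 2 = 1 by rfl), asgOf_two_mul]
    refine ⟨g, fun v hv => update_of_ne (by simpa using hv) .., ?_, ?_, ?_⟩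
    · rintro _ rfl
      exact (rel_R_comp_iff α g 1 3).2 (by simpa [g, asgOf_one] using ha₁)
    · intro i hi
      rw [hg3, hg2]
      exact hpos i (by simpa using hi)
    · intro i hi
      rw [hg3, hg2]
      exact hneg i (by simpa using hi)
  obtain ⟨g, hgf, hgΔ, hgPos, hgNeg⟩ := hα.exists_realizes (asgOf a e) {3} (x := 3)
    (N := 2 * n + 4) rfl (by omega) (by simp [Δ, Fml.free, univ_image_R])
    (fun i hi k hk => by
      have := (hi.elim (fun h => h.1) (fun h => h.1)).2 k hk
      omega) hfin
  have hg1 : g 1 = a := by rw [hgf 1 (by simp), asgOf_one]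
  have hg2 : (fun k => g (2 * k)) = e := by
    funext k
    rw [hgf _ (by simp; omega), asgOf_two_mul]
  refine ⟨g 3, ?_, fun i hi hic => ?_, fun i hi hia => ?_⟩
  · simpa [hg1] using (rel_R_comp_iff α g 1 3).1 (hgΔ _ rfl)
  · simpa [hg2] using hgPos i ⟨hi, hic⟩
  · by_contra hi₁
    exact hgNeg i ⟨hi, hi₁⟩ (by rwa [hg2])

end HoldsLe

theorem itLe_append_iff {Θ : Set Sym} {α β : Model} {a b : α.D} {os : List α.D} {c d : β.D}
    {ds : List β.D} (hl : os.length = ds.length) (x₀ : α.D) (y₀ : β.D) :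
    ITLe Θ α a (os ++ [b]) β c (ds ++ [d]) ↔ HoldsLe Θ (os.length + 1)
      α a (update (os.getD · x₀) os.length b) β c (update (ds.getD · y₀) os.length d) := by
  rw [itLe_iff_holdsLe (n := os.length + 1) (by simp) (by simp [hl]) x₀ y₀, getD_append_singleton,
    getD_append_singleton, hl]

theorem atomSat_iff_holds {α : Model} {a : α.D} {os : List α.D} {n : ℕ} (m : ℕ)
    (hn : os.length = n) :
    atomSat α (.P n m) a os ↔ (IFml.atom n m Fin.val).Holds α a (os.getD · a) := by
  subst hn
  have key : ∀ h : (Sym.P os.length m).arity = os.length + 1,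
      (fun i => (a :: os).get (Fin.cast h i)) = Fin.cons a ((os.getD · a) ∘ Fin.val) := fun h => by
    funext i
    exact Fin.cases rfl (fun k => (List.getD_eq_getElem _ _ k.2).symm) i
  exact ⟨fun ⟨h, hrel⟩ => cast (congrArg (α.rel _) (key h)) hrel,
    fun hrel => ⟨rfl, cast (congrArg (α.rel _) (key rfl)).symm hrel⟩⟩

theorem ITLe.atomSat {Θ : Set Sym} {α β : Model} {a : α.D} {os : List α.D} {c : β.D}
    {ds : List β.D} (hl : os.length = ds.length) (h : ITLe Θ α a os β c ds) {P : Sym}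
    (hP : P ∈ Θ) (hPR : P ≠ .R) (hPE : P ≠ .E) (hat : atomSat α P a os) : atomSat β P c ds := by
  cases P with
  | R => exact absurd rfl hPR
  | E => exact absurd rfl hPE
  | P k m =>
    obtain rfl : k = os.length := by simpa [Sym.arity] using hat.1
    have hover : (IFml.atom os.length m Fin.val).IsOver Θ os.length :=
      ⟨by simpa [ST, Fml.syms] using hP, by simp [IFml.freeVars]⟩
    rw [atomSat_iff_holds m hl.symm]
    exact (itLe_iff_holdsLe rfl hl.symm a c).1 h _ hover ((atomSat_iff_holds m rfl).1 hat)

/-- between ω-saturated models, inclusion of intuitionistic theories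
of the points yields an asimulation. -/
theorem ITLe_is_asim_of_omegaSaturated (Θ : Set Sym)
    (hR : Sym.R ∈ Θ) (hE : Sym.E ∈ Θ)
    (M N : Model) (hM : OmegaSaturated M) (hN : OmegaSaturated N)
    (a : M.D) (bs : List M.D) (c : N.D) (ds : List N.D)
    (hlen : bs.length = ds.length)
    (hle : ITLe Θ M a bs N c ds) :
    IsAsim Θ M N (fun s t a' os c' os' =>
      os.length = os'.length ∧ ITLe Θ (side M N s) a' os (side M N t) c' os') ∧
    (bs.length = ds.length ∧ ITLe Θ M a bs N c ds) := by
  have hsat : ∀ s, OmegaSaturated (side M N s) := by rintro (_ | _) <;> assumption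
  refine ⟨⟨fun _ _ _ _ _ _ hA => hA.1, ?atoms, ?back, ?exi, ?uni⟩, hlen, hle⟩
  case atoms =>
    rintro s t a' os c' os' ⟨hl, h⟩ P hP hPR hPE
    exact h.atomSat hl hP hPR hPE
  case back =>
    rintro s t a' os c' os' ⟨hl, h⟩ c₁ hc
    obtain ⟨a₁, ha₁, h₁, h₂⟩ :=
      ((itLe_iff_holdsLe rfl hl.symm a' c').1 h).exists_relR hR (hsat s) hc
    exact ⟨a₁, ha₁, ⟨hl.symm, (itLe_iff_holdsLe hl.symm rfl c' a').2 h₁⟩,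
      ⟨hl, (itLe_iff_holdsLe rfl hl.symm a' c').2 h₂⟩⟩
  case exi =>
    rintro s t a' os c' os' ⟨hl, h⟩ b hb
    obtain ⟨d, hd, h'⟩ :=
      ((itLe_iff_holdsLe rfl hl.symm a' c').1 h).exists_relE hR hE (hsat t) hb
    exact ⟨d, hd, by simp [hl], (itLe_append_iff hl a' c').2 h'⟩
  case uni =>
    rintro s t a' os c' os' ⟨hl, h⟩ c₁ d₁ hc hd
    obtain ⟨a₁, b₁, ha₁, hb₁, h'⟩ :=
      ((itLe_iff_holdsLe rfl hl.symm a' c').1 h).exists_relR_relE hR hE (hsat s) hc hd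
    exact ⟨a₁, b₁, ha₁, hb₁, by simp [hl], (itLe_append_iff hl a' c').2 h'⟩

end IPC
end

section
/- Let φ(x, w̄ₙ) be a satisfiable first-order formula invariant with respect to asimulations, and let IC(φ) be the set of Σ_φ-formulas in variables x, w̄ₙ that are standard x-translations of intuitionistic formulas and logical consequences of φ. Then IC(φ) ⊨ φ. -/
/-!
Let `(N, f)` satisfy every intuitionistic consequence of `φ`. By compactness there is a model
`(M, g)` of `φ` whose (admissible) intuitionistic theory is contained in that of `(N, f)`:
otherwise `φ` would entail a finite disjunction of translations that fail at `(N, f)`.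
Ultrapowers over a nonprincipal ultrafilter on `ℕ` are elementary extensions realizing countable
types, and between such models inclusion of intuitionistic theories is an asimulation: by
saturation each back-and-forth condition reduces to finitely many formulas, and those are
handled by one translated implication, existential or universal formula. Invariance of `φ` under
asimulations then carries `φ` from the image of `(M, g)` to the image of `(N, f)`.
-/

namespace IPC

open Function

lemma comp_vec2 {D : Type} (f : ℕ → D) (x y : ℕ) :
    (fun i => f ((![x, y] : Fin 2 → ℕ) i)) = ![f x, f y] := by
  funext i; fin_cases i <;> rfl

@[simp] lemma eval_atom_R (M : Model) (f : ℕ → M.D) (x y : ℕ) :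
    (Fml.atom .R ![x, y]).eval M f ↔ relR M (f x) (f y) :=
  iff_of_eq (congrArg (M.rel .R) (comp_vec2 f x y))

@[simp] lemma eval_atom_E (M : Model) (f : ℕ → M.D) (x y : ℕ) :
    (Fml.atom .E ![x, y]).eval M f ↔ relE M (f x) (f y) :=
  iff_of_eq (congrArg (M.rel .E) (comp_vec2 f x y))

lemma free_atom_R (x y : ℕ) : (Fml.atom .R ![x, y]).free = {x, y} := by
  change Finset.univ.image ![x, y] = _
  ext v; simp [Fin.exists_fin_two, eq_comm]

lemma free_atom_E (x y : ℕ) : (Fml.atom .E ![x, y]).free = {x, y} := by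
  change Finset.univ.image ![x, y] = _
  ext v; simp [Fin.exists_fin_two, eq_comm]

lemma update_eqOn_of_eqOn_erase {D : Type} {f g : ℕ → D} {s : Finset ℕ} {v : ℕ} (d : D)
    (h : ∀ u ∈ s.erase v, f u = g u) : ∀ u ∈ s, update f v d u = update g v d u := by
  intro u hu
  by_cases huv : u = v
  · simp [huv]
  · simp [huv, h u (Finset.mem_erase.2 ⟨huv, hu⟩)]

theorem Fml.eval_congr {M : Model} {ψ : Fml} {f g : ℕ → M.D}
    (h : ∀ v ∈ ψ.free, f v = g v) : ψ.eval M f ↔ ψ.eval M g := by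
  induction ψ generalizing f g with
  | atom s args =>
    simp only [Fml.eval]
    rw [funext fun i => h (args i) (by simp [Fml.free])]
  | eq v w => simp [Fml.eval, h v (by simp [Fml.free]), h w (by simp [Fml.free])]
  | fls => rfl
  | neg φ ih => exact not_congr (ih h)
  | conj φ ψ ih₁ ih₂ =>
    exact and_congr (ih₁ fun v hv => h v (Finset.mem_union_left _ hv))
      (ih₂ fun v hv => h v (Finset.mem_union_right _ hv))
  | disj φ ψ ih₁ ih₂ =>
    exact or_congr (ih₁ fun v hv => h v (Finset.mem_union_left _ hv))
      (ih₂ fun v hv => h v (Finset.mem_union_right _ hv))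
  | impl φ ψ ih₁ ih₂ =>
    exact imp_congr (ih₁ fun v hv => h v (Finset.mem_union_left _ hv))
      (ih₂ fun v hv => h v (Finset.mem_union_right _ hv))
  | all v φ ih => exact forall_congr' fun d => ih (update_eqOn_of_eqOn_erase d h)
  | ex v φ ih => exact exists_congr fun d => ih (update_eqOn_of_eqOn_erase d h)

/-! ### Standard translations -/

def ifree : IFml → Finset ℕ
  | .atom _ _ args => Finset.univ.image args
  | .fls => ∅
  | .conj i j => ifree i ∪ ifree j
  | .disj i j => ifree i ∪ ifree j
  | .impl i j => ifree i ∪ ifree j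
  | .all v i => (ifree i).erase v
  | .ex v i => (ifree i).erase v

theorem mem_free_ST {i : IFml} {x v : ℕ} (hv : v ∈ (ST i x).free) :
    v = x ∨ ∃ j ∈ ifree i, v = 2 * j := by
  induction i generalizing x v with
  | atom n m args =>
    change v ∈ Finset.univ.image _ at hv
    obtain ⟨k, -, rfl⟩ := Finset.mem_image.1 hv
    refine Fin.cases (Or.inl rfl) (fun j => Or.inr ⟨args j, ?_, rfl⟩) k
    simp [ifree]
  | fls => simp [ST, Fml.free] at hv; omega
  | conj i j ih₁ ih₂ | disj i j ih₁ ih₂ =>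
    simp only [ST, Fml.free, Finset.mem_union] at hv
    rcases hv with hv | hv
    · rcases ih₁ hv with h | ⟨k, hk, h⟩
      exacts [Or.inl h, Or.inr ⟨k, by simp [ifree, hk], h⟩]
    · rcases ih₂ hv with h | ⟨k, hk, h⟩
      exacts [Or.inl h, Or.inr ⟨k, by simp [ifree, hk], h⟩]
  | impl i j ih₁ ih₂ =>
    simp only [ST, Fml.free, ↓free_atom_R, Finset.mem_erase, Finset.mem_union, Finset.mem_insert,
      Finset.mem_singleton] at hv
    have := @ih₁ (x + 2) v
    have := @ih₂ (x + 2) v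
    simp only [ifree, Finset.mem_union]
    aesop
  | all w i ih =>
    simp only [ST, Fml.free, ↓free_atom_R, ↓free_atom_E, Finset.mem_erase, Finset.mem_union,
      Finset.mem_insert, Finset.mem_singleton] at hv
    have := @ih (x + 2) v
    simp only [ifree, Finset.mem_erase]
    aesop
  | ex w i ih =>
    simp only [ST, Fml.free, ↓free_atom_E, Finset.mem_erase, Finset.mem_union, Finset.mem_insert,
      Finset.mem_singleton] at hv
    simp only [ifree, Finset.mem_erase]
    rcases hv with ⟨hnw, (h | h) | h⟩
    · exact Or.inl h
    · exact absurd h hnw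
    · rcases ih h with h | ⟨k, hk, rfl⟩
      exacts [Or.inl h, Or.inr ⟨k, ⟨fun hkw => hnw (by rw [hkw]), hk⟩, rfl⟩]

theorem freeOK_ST {n : ℕ} {i : IFml} (h : ∀ j ∈ ifree i, j < n) : FreeOK n (ST i 1) := by
  intro v hv
  rcases mem_free_ST hv with rfl | ⟨j, hj, rfl⟩
  exacts [Or.inl rfl, Or.inr ⟨j, h j hj, rfl⟩]

@[simp] lemma update_apply_two_mul_of_odd {D : Type} {f : ℕ → D} {x : ℕ} (hx : x % 2 = 1) (d : D)
    (j : ℕ) : update f x d (2 * j) = f (2 * j) :=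
  update_of_ne (by omega) d f

lemma update_two_mul_apply_of_odd {D : Type} {f : ℕ → D} {x : ℕ} (hx : x % 2 = 1) (w : ℕ)
    (e : D) : update f (2 * w) e x = f x :=
  update_of_ne (by omega) e f

theorem eval_ST_congr {M : Model} {i : IFml} {x y : ℕ} {f g : ℕ → M.D}
    (hx : x % 2 = 1) (hy : y % 2 = 1) (hxy : f x = g y)
    (hobj : ∀ j ∈ ifree i, f (2 * j) = g (2 * j)) :
    (ST i x).eval M f ↔ (ST i y).eval M g := by
  induction i generalizing x y f g with
  | atom n m args =>
    simp only [ST, Fml.eval]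
    congr! 1
    funext k
    refine Fin.cases hxy (fun j => hobj (args j) ?_) k
    simp [ifree]
  | fls => simp [ST, Fml.eval]
  | conj i j ih₁ ih₂ | disj i j ih₁ ih₂ =>
    simp only [ST, Fml.eval]
    rw [ih₁ hx hy hxy fun k hk => hobj k (by simp [ifree, hk]),
      ih₂ hx hy hxy fun k hk => hobj k (by simp [ifree, hk])]
  | impl i j ih₁ ih₂ =>
    have hx' : (x + 2) % 2 = 1 := by omega
    have hy' : (y + 2) % 2 = 1 := by omega
    simp only [ST, Fml.eval, ↓eval_atom_R]
    refine forall_congr' fun d => ?_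
    simp only [update_self, update_of_ne (show x ≠ x + 2 by omega),
      update_of_ne (show y ≠ y + 2 by omega), hxy]
    refine imp_congr_right fun _ => imp_congr (ih₁ hx' hy' (by simp) fun k hk => ?_)
      (ih₂ hx' hy' (by simp) fun k hk => ?_) <;>
    simpa [hx', hy'] using hobj k (by simp [ifree, hk])
  | all w i ih =>
    have hx' : (x + 2) % 2 = 1 := by omega
    have hy' : (y + 2) % 2 = 1 := by omega
    simp only [ST, Fml.eval, ↓eval_atom_R, ↓eval_atom_E]
    refine forall_congr' fun d => forall_congr' fun e => ?_
    simp only [update_two_mul_apply_of_odd, update_self, update_of_ne (show x ≠ x + 2 by omega),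
      update_of_ne (show y ≠ y + 2 by omega), hx, hy, hx', hy', hxy]
    refine imp_congr_right fun _ => ih hx' hy' (by simp [update_two_mul_apply_of_odd, hx', hy'])
      fun k hk => ?_
    by_cases hkw : k = w
    · simp [hkw]
    · simpa [update_of_ne (show 2 * k ≠ 2 * w by omega), hx', hy']
        using hobj k (Finset.mem_erase.2 ⟨hkw, hk⟩)
  | ex w i ih =>
    simp only [ST, Fml.eval, ↓eval_atom_E]
    refine exists_congr fun e => ?_
    simp only [update_two_mul_apply_of_odd, update_self, hx, hy, hxy]
    refine and_congr_right fun _ => ih hx hy (by simp [update_two_mul_apply_of_odd, hx, hy, hxy])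
      fun k hk => ?_
    by_cases hkw : k = w
    · simp [hkw]
    · simpa [update_of_ne (show 2 * k ≠ 2 * w by omega)] using hobj k (Finset.mem_erase.2 ⟨hkw, hk⟩)

/-! ### Evaluation points -/

/-- Variables other than `x, w₀, …, w_{l-1}` get a default that does not depend on `a`: moving
the world or appending an object then changes a single variable. -/
noncomputable def assign (α : Model) (a : α.D) (os : List α.D) : ℕ → α.D :=
  fun v => if v = 1 then a else if v % 2 = 0 then os.getD (v / 2) α.ne.some else α.ne.some

@[simp] lemma assign_one (α : Model) (a : α.D) (os : List α.D) : assign α a os 1 = a := by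
  simp [assign]

lemma assign_two_mul (α : Model) (a : α.D) (os : List α.D) (j : ℕ) :
    assign α a os (2 * j) = os.getD j α.ne.some := by
  simp [assign, show 2 * j ≠ 1 by omega]

lemma assign_append (α : Model) (a b : α.D) (os : List α.D) :
    assign α a (os ++ [b]) = update (assign α a os) (2 * os.length) b := by
  funext v
  by_cases hv : v = 2 * os.length
  · subst hv; simp [assign_two_mul]
  rw [update_of_ne hv]
  unfold assign
  split_ifs with h1 h2
  · rfl
  · rcases lt_or_gt_of_ne (show v / 2 ≠ os.length by omega) with hlt | hgt
    · exact List.getD_append _ _ _ _ hlt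
    · rw [List.getD_eq_default _ _ (by simp; omega), List.getD_eq_default _ _ (by omega)]
  · rfl

@[simp] lemma assign_append_length (α : Model) (a b : α.D) (os : List α.D) :
    assign α a (os ++ [b]) (2 * os.length) = b := by
  simp [assign_append]

def ISat (α : Model) (a : α.D) (os : List α.D) (i : IFml) : Prop :=
  (ST i 1).eval α (assign α a os)

lemma eval_ST_iff_iSat {α : Model} {i : IFml} {x : ℕ} {f : ℕ → α.D} {a : α.D} {os : List α.D}
    (hx : x % 2 = 1) (hfx : f x = a) (hobj : ∀ j ∈ ifree i, f (2 * j) = assign α a os (2 * j)) :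
    (ST i x).eval α f ↔ ISat α a os i :=
  eval_ST_congr hx rfl (by rw [hfx, assign_one]) hobj

lemma eval_ST_update_three (α : Model) (a y : α.D) (os : List α.D) (i : IFml) :
    (ST i 3).eval α (update (assign α a os) 3 y) ↔ ISat α y os i :=
  eval_ST_iff_iSat rfl (update_self ..) fun j _ => by
    rw [update_of_ne (by omega), assign_two_mul, assign_two_mul]

lemma iSat_append {α : Model} {a b : α.D} {os : List α.D} {i : IFml}
    (hi : ∀ j ∈ ifree i, j < os.length) : ISat α a (os ++ [b]) i ↔ ISat α a os i :=
  eval_ST_iff_iSat rfl (assign_one ..) fun j hj => by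
    rw [assign_two_mul, assign_two_mul, List.getD_append _ _ _ _ (hi j hj)]

lemma sat_iff_eval {M : Model} {n : ℕ} {ψ : Fml} {a : M.D} {bs : List M.D}
    (hok : FreeOK n ψ) (hlen : bs.length = n) {g : ℕ → M.D}
    (hg1 : g 1 = a) (hg2 : ∀ i : Fin bs.length, g (2 * i.val) = bs.get i) :
    Sat M a bs ψ ↔ ψ.eval M g := by
  refine ⟨fun h => h g hg1 hg2, fun h f hf1 hf2 => (Fml.eval_congr fun v hv => ?_).2 h⟩
  rcases hok v hv with rfl | ⟨i, hi, rfl⟩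
  · rw [hf1, hg1]
  · rw [hf2 ⟨i, by omega⟩, hg2 ⟨i, by omega⟩]

lemma sat_ST_iff_iSat {α : Model} {n : ℕ} {i : IFml} {a : α.D} {os : List α.D}
    (hok : FreeOK n (ST i 1)) (hlen : os.length = n) : Sat α a os (ST i 1) ↔ ISat α a os i :=
  sat_iff_eval hok hlen (assign_one ..) fun i => by
    rw [assign_two_mul, List.getD_eq_getElem _ _ i.isLt, List.get_eq_getElem]

noncomputable def iconj (S : Finset IFml) : IFml := S.toList.foldr .conj (.impl .fls .fls)

noncomputable def idisj (S : Finset IFml) : IFml := S.toList.foldr .disj .fls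

lemma eval_ST_iconj (M : Model) (f : ℕ → M.D) (x : ℕ) (S : Finset IFml) :
    (ST (iconj S) x).eval M f ↔ ∀ i ∈ S, (ST i x).eval M f := by
  simp_rw [iconj, ← Finset.mem_toList]
  induction S.toList with
  | nil => simp [ST, Fml.eval]
  | cons i L ih => simp [ST, Fml.eval, ih]

lemma eval_ST_idisj (M : Model) (f : ℕ → M.D) (x : ℕ) (S : Finset IFml) :
    (ST (idisj S) x).eval M f ↔ ∃ i ∈ S, (ST i x).eval M f := by
  simp_rw [idisj, ← Finset.mem_toList]
  induction S.toList with
  | nil => simp [ST, Fml.eval]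
  | cons i L ih => simp [ST, Fml.eval, ih]

/-! ### Admissible formulas -/

lemma singleton_R_subset_sigOf (φ : Fml) : {Sym.R} ⊆ sigOf φ := by simp [sigOf]

lemma singleton_E_subset_sigOf (φ : Fml) : {Sym.E} ⊆ sigOf φ := by simp [sigOf]

def Admissible (φ : Fml) (l : ℕ) (i : IFml) : Prop :=
  (∀ x, (ST i x).syms ⊆ sigOf φ) ∧ ∀ j ∈ ifree i, j < l

namespace Admissible

variable {φ : Fml} {l : ℕ} {i j : IFml}

lemma fls : Admissible φ l .fls := ⟨fun _ => by simp [ST, Fml.syms], by simp [ifree]⟩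

lemma atom {m : ℕ} (h : Sym.P l m ∈ sigOf φ) : Admissible φ l (.atom l m fun k => k) :=
  ⟨fun _ => by simpa [ST, Fml.syms], fun j hj => by
    obtain ⟨k, -, rfl⟩ := Finset.mem_image.1 hj; exact k.isLt⟩

lemma conj (hi : Admissible φ l i) (hj : Admissible φ l j) : Admissible φ l (.conj i j) :=
  ⟨fun x => Finset.union_subset (hi.1 x) (hj.1 x),
    fun k hk => (Finset.mem_union.1 hk).elim (hi.2 k) (hj.2 k)⟩

lemma disj (hi : Admissible φ l i) (hj : Admissible φ l j) : Admissible φ l (.disj i j) :=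
  ⟨fun x => Finset.union_subset (hi.1 x) (hj.1 x),
    fun k hk => (Finset.mem_union.1 hk).elim (hi.2 k) (hj.2 k)⟩

lemma impl (hi : Admissible φ l i) (hj : Admissible φ l j) : Admissible φ l (.impl i j) :=
  ⟨fun x => Finset.union_subset (singleton_R_subset_sigOf φ)
      (Finset.union_subset (hi.1 (x + 2)) (hj.1 (x + 2))),
    fun k hk => (Finset.mem_union.1 hk).elim (hi.2 k) (hj.2 k)⟩

lemma ex (hi : Admissible φ (l + 1) i) : Admissible φ l (.ex l i) :=
  ⟨fun x => Finset.union_subset (singleton_E_subset_sigOf φ) (hi.1 x),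
    fun k hk => by
      obtain ⟨hkl, hk⟩ := Finset.mem_erase.1 hk
      have := hi.2 k hk
      omega⟩

lemma all (hi : Admissible φ (l + 1) i) : Admissible φ l (.all l i) :=
  ⟨fun x => Finset.union_subset
      (Finset.union_subset (singleton_R_subset_sigOf φ) (singleton_E_subset_sigOf φ))
      (hi.1 (x + 2)),
    fun k hk => by
      obtain ⟨hkl, hk⟩ := Finset.mem_erase.1 hk
      have := hi.2 k hk
      omega⟩

lemma iconj {S : Finset IFml} (h : ∀ i ∈ S, Admissible φ l i) : Admissible φ l (iconj S) := by
  suffices ∀ L : List IFml, (∀ i ∈ L, Admissible φ l i) →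
      Admissible φ l (L.foldr .conj (.impl .fls .fls)) from this _ (by simpa using h)
  intro L hL
  induction L with
  | nil => exact fls.impl fls
  | cons i L ih =>
    exact (hL i List.mem_cons_self).conj (ih fun k hk => hL k (List.mem_cons_of_mem _ hk))

lemma idisj {S : Finset IFml} (h : ∀ i ∈ S, Admissible φ l i) : Admissible φ l (idisj S) := by
  suffices ∀ L : List IFml, (∀ i ∈ L, Admissible φ l i) →
      Admissible φ l (L.foldr .disj .fls) from this _ (by simpa using h)
  intro L hL
  induction L with
  | nil => exact fls
  | cons i L ih =>
    exact (hL i List.mem_cons_self).disj (ih fun k hk => hL k (List.mem_cons_of_mem _ hk))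

end Admissible

section Clauses

variable {α : Model} {a : α.D} {os : List α.D}

lemma iSat_impl {i j : IFml} :
    ISat α a os (.impl i j) ↔ ∀ y, relR α a y → ISat α y os i → ISat α y os j := by
  simp only [ISat, ST, Nat.reduceAdd, Fml.eval, ↓eval_atom_R, update_self,
    update_of_ne (show 1 ≠ 3 by omega), assign_one, eval_ST_update_three]

lemma iSat_ex {i : IFml} :
    ISat α a os (.ex os.length i) ↔ ∃ b, relE α a b ∧ ISat α a (os ++ [b]) i := by
  simp only [ISat, ST, Fml.eval, ↓eval_atom_E, update_self, assign_append,
    update_of_ne (show 1 ≠ 2 * os.length by omega), assign_one]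

lemma iSat_all {i : IFml} : ISat α a os (.all os.length i) ↔
    ∀ y b, relR α a y → relE α y b → ISat α y (os ++ [b]) i := by
  simp only [ISat, ST, Nat.reduceAdd, Fml.eval, ↓eval_atom_R, ↓eval_atom_E, update_self, and_imp,
    update_of_ne (show 1 ≠ 2 * os.length by omega), update_of_ne (show 3 ≠ 2 * os.length by omega),
    update_of_ne (show 1 ≠ 3 by omega), assign_one]
  refine forall_congr' fun y => forall_congr' fun b => ?_
  rw [update_comm (show 3 ≠ 2 * os.length by omega), ← assign_append, eval_ST_update_three, ISat]

lemma atomSat_iff_iSat (m : ℕ) :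
    atomSat α (.P os.length m) a os ↔ ISat α a os (.atom os.length m fun k => k) := by
  have hargs : ∀ h : (Sym.P os.length m).arity = os.length + 1,
      (fun k => (a :: os).get (Fin.cast h k)) =
        fun k => assign α a os ((Fin.cons 1 fun j : Fin os.length => 2 * (j : ℕ) :
          Fin (os.length + 1) → ℕ) k) := by
    intro h
    funext k
    refine Fin.cases (by simp; rfl) (fun j => ?_) k
    simp only [List.get_eq_getElem, Fin.cons_succ, assign_two_mul, List.getD_eq_getElem _ _ j.isLt]
    rfl
  exact ⟨fun ⟨h, hrel⟩ => by rwa [hargs h] at hrel, fun h => ⟨rfl, by rwa [hargs rfl]⟩⟩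

end Clauses

/-! ### Ultraproducts -/

section Ultraproduct

variable {ι : Type} (U : Ultrafilter ι) (Ms : ι → Model)

def UProd.setoid : Setoid (∀ i, (Ms i).D) where
  r F G := ∀ᶠ i in U, F i = G i
  iseqv :=
    ⟨fun _ => .of_forall fun _ => rfl, fun h => h.mono fun _ => Eq.symm,
      fun h₁ h₂ => (h₁.and h₂).mono fun _ h => h.1.trans h.2⟩

noncomputable def UProd : Model where
  D := Quotient (UProd.setoid U Ms)
  ne := ⟨⟦fun i => (Ms i).ne.some⟧⟩
  rel s v := ∀ᶠ i in U, (Ms i).rel s fun j => Quotient.out (v j) i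

variable {U Ms}

variable (U) in
def UProd.mk (F : ∀ i, (Ms i).D) : (UProd U Ms).D := Quotient.mk (UProd.setoid U Ms) F

noncomputable def UProd.out (d : (UProd U Ms).D) : ∀ i, (Ms i).D := Quotient.out d

@[simp] lemma UProd.mk_out (d : (UProd U Ms).D) : UProd.mk U (UProd.out d) = d := Quotient.out_eq d

lemma UProd.mk_eq_mk {F G : ∀ i, (Ms i).D} : UProd.mk U F = UProd.mk U G ↔ ∀ᶠ i in U, F i = G i :=
  Quotient.eq (r := UProd.setoid U Ms)

lemma UProd.out_mk (F : ∀ i, (Ms i).D) : ∀ᶠ i in U, UProd.out (UProd.mk U F) i = F i :=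
  UProd.mk_eq_mk.1 (UProd.mk_out _)

lemma UProd.update_mk (F : ℕ → ∀ i, (Ms i).D) (v : ℕ) (d : (UProd U Ms).D) :
    update (fun u => UProd.mk U (F u)) v d = fun u => UProd.mk U (update F v (UProd.out d) u) := by
  funext u
  by_cases huv : u = v
  · subst huv; simp
  · simp [huv]

lemma update_apply_pi (F : ℕ → ∀ i, (Ms i).D) (v : ℕ) (G : ∀ i, (Ms i).D) (i : ι) :
    (fun u => update F v G u i) = update (fun u => F u i) v (G i) := by
  funext u
  by_cases huv : u = v
  · subst huv; simp
  · simp [huv]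

variable (U Ms) in
def LosHolds (ψ : Fml) : Prop :=
  ∀ F : ℕ → ∀ i, (Ms i).D,
    ψ.eval (UProd U Ms) (fun v => UProd.mk U (F v)) ↔ ∀ᶠ i in U, ψ.eval (Ms i) (fun v => F v i)

namespace LosHolds

variable {ψ χ : Fml}

lemma of_iff (h : LosHolds U Ms ψ) (hψχ : ∀ M f, ψ.eval M f ↔ χ.eval M f) :
    LosHolds U Ms χ := fun F =>
  (hψχ _ _).symm.trans ((h F).trans (Filter.eventually_congr (.of_forall fun _ => hψχ _ _)))

lemma atom (s : Sym) (args : Fin s.arity → ℕ) : LosHolds U Ms (.atom s args) := fun F => by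
  refine Filter.eventually_congr (((Filter.eventually_all).2 fun j =>
    UProd.out_mk (F (args j))).mono fun i hi => ?_)
  change (Ms i).rel s (fun j => UProd.out (UProd.mk U _) i) ↔ _
  rw [funext hi]; rfl

lemma eq (v w : ℕ) : LosHolds U Ms (.eq v w) := fun _ => UProd.mk_eq_mk

lemma fls : LosHolds U Ms .fls := fun _ => ⟨False.elim, fun h => h.exists.elim fun _ => id⟩

lemma neg (h : LosHolds U Ms ψ) : LosHolds U Ms ψ.neg := fun F =>
  (h F).not.trans Ultrafilter.eventually_not.symm

lemma conj (h₁ : LosHolds U Ms ψ) (h₂ : LosHolds U Ms χ) : LosHolds U Ms (.conj ψ χ) := fun F =>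
  (and_congr (h₁ F) (h₂ F)).trans Filter.eventually_and.symm

lemma disj (h₁ : LosHolds U Ms ψ) (h₂ : LosHolds U Ms χ) : LosHolds U Ms (.disj ψ χ) := fun F =>
  (or_congr (h₁ F) (h₂ F)).trans Ultrafilter.eventually_or.symm

lemma impl (h₁ : LosHolds U Ms ψ) (h₂ : LosHolds U Ms χ) : LosHolds U Ms (.impl ψ χ) := fun F =>
  (imp_congr (h₁ F) (h₂ F)).trans Ultrafilter.eventually_imp.symm

lemma ex (h : LosHolds U Ms ψ) (v : ℕ) : LosHolds U Ms (.ex v ψ) := by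
  intro F
  change (∃ d, _) ↔ ∀ᶠ i in (U : Filter ι), ∃ d, _
  constructor
  · rintro ⟨d, hd⟩
    rw [UProd.update_mk, h] at hd
    exact hd.mono fun i hi => ⟨UProd.out d i, by rwa [update_apply_pi] at hi⟩
  · intro hF
    let G : ∀ i, (Ms i).D := fun i =>
      @Classical.epsilon _ (Ms i).ne fun d => ψ.eval (Ms i) (update (fun u => F u i) v d)
    refine ⟨UProd.mk U G, ?_⟩
    rw [UProd.update_mk, h]
    exact (hF.and (UProd.out_mk G)).mono fun i hi => by
      rw [update_apply_pi, hi.2]; exact Classical.epsilon_spec hi.1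

lemma all (h : LosHolds U Ms ψ) (v : ℕ) : LosHolds U Ms (.all v ψ) :=
  (h.neg.ex v).neg.of_iff fun M f => by simp [Fml.eval]

end LosHolds

theorem los (ψ : Fml) : LosHolds U Ms ψ := by
  induction ψ with
  | atom s args => exact .atom s args
  | eq v w => exact .eq v w
  | fls => exact .fls
  | neg ψ ih => exact ih.neg
  | conj ψ χ ih₁ ih₂ => exact ih₁.conj ih₂
  | disj ψ χ ih₁ ih₂ => exact ih₁.disj ih₂
  | impl ψ χ ih₁ ih₂ => exact ih₁.impl ih₂
  | all v ψ ih => exact ih.all v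
  | ex v ψ ih => exact ih.ex v

end Ultraproduct

theorem compactness {Γ : Set Fml}
    (hfin : ∀ S : Finset Fml, ↑S ⊆ Γ → ∃ (M : Model) (g : ℕ → M.D), ∀ ψ ∈ S, ψ.eval M g) :
    ∃ (M : Model) (g : ℕ → M.D), ∀ ψ ∈ Γ, ψ.eval M g := by
  classical
  let ι := {S : Finset Fml // ↑S ⊆ Γ}
  choose Ms gs hgs using fun S : ι => hfin S.1 S.2
  have : Nonempty ι := ⟨⟨∅, by simp⟩⟩
  have : IsDirected ι (· ≤ ·) := ⟨fun S T =>
    ⟨⟨S.1 ∪ T.1, by simpa using ⟨S.2, T.2⟩⟩, Finset.subset_union_left, Finset.subset_union_right⟩⟩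
  let U := Ultrafilter.of (Filter.atTop : Filter ι)
  refine ⟨UProd U Ms, fun v => UProd.mk U fun S => gs S v, fun ψ hψ => (los ψ _).2 ?_⟩
  exact Filter.mem_of_superset (Ultrafilter.of_le _ (Filter.mem_atTop ⟨{ψ}, by simpa using hψ⟩))
    fun T hT => hgs T ψ (hT (Finset.mem_singleton_self ψ))

section Ultrapower

variable {ι : Type} (U : Ultrafilter ι) {M : Model}

def diag (M : Model) (a : M.D) : (UProd U fun _ : ι => M).D := UProd.mk U fun _ => a

lemma eval_diag (ψ : Fml) (g : ℕ → M.D) :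
    ψ.eval (UProd U fun _ => M) (fun v => diag U M (g v)) ↔ ψ.eval M g :=
  (los ψ _).trans Filter.eventually_const

def objects {D : Type} (g : ℕ → D) (n : ℕ) : List D := List.ofFn fun k : Fin n => g (2 * k)

lemma sat_diag_iff_eval {n : ℕ} {ψ : Fml} (hok : FreeOK n ψ) (g : ℕ → M.D) :
    Sat (UProd U fun _ => M) (diag U M (g 1)) ((objects g n).map (diag U M)) ψ ↔ ψ.eval M g :=
  (sat_iff_eval hok (by simp [objects]) (g := fun v => diag U M (g v)) rfl
    fun i => by simp only [List.get_eq_getElem, List.getElem_map]; simp [objects]).trans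
    (eval_diag U ψ g)

end Ultrapower

/-! ### Realizing types -/

/-- ℵ₁-saturation: a finitely satisfiable countable type in the variables `V`, with the values of
`f` on the other variables as parameters, is realized. -/
def RealizesCountableTypes (M : Model) : Prop :=
  ∀ (f : ℕ → M.D) (V : List ℕ) (e : ℕ → Fml),
    (∀ k, ∃ g : ℕ → M.D, (∀ v ∉ V, g v = f v) ∧ ∀ m < k, (e m).eval M g) →
    ∃ g : ℕ → M.D, (∀ v ∉ V, g v = f v) ∧ ∀ m, (e m).eval M g

lemma eval_foldr_ex (M : Model) (V : List ℕ) (ψ : Fml) (f : ℕ → M.D) :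
    (V.foldr .ex ψ).eval M f ↔ ∃ g : ℕ → M.D, (∀ v ∉ V, g v = f v) ∧ ψ.eval M g := by
  induction V generalizing f with
  | nil => exact ⟨fun h => ⟨f, fun _ _ => rfl, h⟩, fun ⟨g, hg, h⟩ =>
      (Fml.eval_congr fun v _ => (hg v List.not_mem_nil).symm).2 h⟩
  | cons w V ih =>
    simp only [List.foldr_cons, Fml.eval, ih]
    constructor
    · rintro ⟨d, g, hg, h⟩
      exact ⟨g, fun v hv => by rw [hg v (by simp_all), update_of_ne (by simp_all)], h⟩
    · rintro ⟨g, hg, h⟩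
      refine ⟨g w, g, fun v hv => ?_, h⟩
      by_cases hvw : v = w
      · simp [hvw]
      · rw [update_of_ne hvw, hg v (by simp [hvw, hv])]

lemma eval_conjList (M : Model) (L : List Fml) (f : ℕ → M.D) :
    (conjList L).eval M f ↔ ∀ ψ ∈ L, ψ.eval M f := by
  induction L with
  | nil => simp [conjList, Fml.eval]
  | cons ψ L ih => simp [conjList, Fml.eval, ih]

lemma exists_eventually_ge_of_le_cofinite {U : Ultrafilter ℕ} (hU : (U : Filter ℕ) ≤ .cofinite)
    {P : ℕ → ℕ → Prop} (h0 : ∀ i, P i 0) (hP : ∀ k, ∀ᶠ i in U, P i k) :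
    ∃ K : ℕ → ℕ, (∀ i, P i (K i)) ∧ ∀ k, ∀ᶠ i in U, k ≤ K i := by
  classical
  refine ⟨fun i => Nat.findGreatest (P i) i,
    fun i => Nat.findGreatest_spec (Nat.zero_le i) (h0 i), fun k => ?_⟩
  have hk : ∀ᶠ i in U, k ≤ i :=
    hU (by simpa [Nat.cofinite_eq_atTop] using Filter.eventually_ge_atTop k)
  exact ((hP k).and hk).mono fun i hi => Nat.le_findGreatest hi.2 hi.1

theorem realizesCountableTypes_uprod {U : Ultrafilter ℕ} (hU : (U : Filter ℕ) ≤ .cofinite)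
    (Ms : ℕ → Model) : RealizesCountableTypes (UProd U Ms) := by
  intro f V e hfin
  set F : ℕ → ∀ i, (Ms i).D := fun v => UProd.out (f v)
  have hF : (fun v => UProd.mk U (F v)) = f := funext fun v => UProd.mk_out (f v)
  let C : ℕ → Fml := fun k => V.foldr .ex (conjList ((List.range k).map e))
  have hC : ∀ (α : Model) (k : ℕ) (f : ℕ → α.D), (C k).eval α f ↔
      ∃ g : ℕ → α.D, (∀ v ∉ V, g v = f v) ∧ ∀ m < k, (e m).eval α g := by
    intro α k f
    simp [C, eval_foldr_ex, eval_conjList]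
  obtain ⟨K, hK, hKle⟩ := exists_eventually_ge_of_le_cofinite hU
    (P := fun i k => (C k).eval (Ms i) fun v => F v i)
    (fun i => (hC _ 0 _).2 ⟨_, fun _ _ => rfl, by simp⟩)
    (fun k => (los (C k) F).1 (by rw [hF]; exact (hC _ k f).2 (hfin k)))
  choose g hgV hge using fun i => (hC _ _ _).1 (hK i)
  refine ⟨fun v => UProd.mk U fun i => g i v, fun v hv => ?_, fun m => (los (e m) _).2 ?_⟩
  · rw [← hF]; exact congrArg (UProd.mk U) (funext fun i => hgV i v hv)
  · exact (hKle (m + 1)).mono fun i hi => hge i m hi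

theorem RealizesCountableTypes.exists_forall {M : Model} (hM : RealizesCountableTypes M)
    {ι : Type} [Countable ι] (f : ℕ → M.D) (V : List ℕ) (β : Fml) (e : ι → Fml)
    (hfin : ∀ S : Finset ι,
      ∃ g : ℕ → M.D, (∀ v ∉ V, g v = f v) ∧ β.eval M g ∧ ∀ i ∈ S, (e i).eval M g) :
    ∃ g : ℕ → M.D, (∀ v ∉ V, g v = f v) ∧ β.eval M g ∧ ∀ i, (e i).eval M g := by
  classical
  obtain ⟨σ, hσ⟩ := exists_surjective_nat (Option ι)
  obtain ⟨g, hgV, hg⟩ := hM f V (fun m => (σ m).elim β e) fun k => by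
    obtain ⟨g, hgV, hβ, he⟩ := hfin ((Finset.range k).image σ).eraseNone
    refine ⟨g, hgV, fun m hm => ?_⟩
    cases hσm : σ m with
    | none => simpa [hσm] using hβ
    | some i => simpa [hσm] using he i (by simpa using ⟨m, hm, hσm⟩)
  refine ⟨g, hgV, ?_, fun i => ?_⟩
  · obtain ⟨m, hm⟩ := hσ none; simpa [hm] using hg m
  · obtain ⟨m, hm⟩ := hσ (some i); simpa [hm] using hg m

def IFml.code : IFml → ℕ
  | .atom _ m args => Nat.pair 0 (Nat.pair m (Encodable.encode (List.ofFn args)))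
  | .fls => Nat.pair 1 0
  | .conj i j => Nat.pair 2 (Nat.pair i.code j.code)
  | .disj i j => Nat.pair 3 (Nat.pair i.code j.code)
  | .impl i j => Nat.pair 4 (Nat.pair i.code j.code)
  | .all v i => Nat.pair 5 (Nat.pair v i.code)
  | .ex v i => Nat.pair 6 (Nat.pair v i.code)

theorem IFml.code_injective : Function.Injective IFml.code := by
  intro a b h
  induction a generalizing b <;> cases b <;> simp [IFml.code, Nat.pair_eq_pair] at h ⊢
  case atom.atom n m args n' m' args' =>
    obtain ⟨rfl, hargs⟩ := h
    obtain rfl : n = n' := by simpa using congrArg List.length hargs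
    exact ⟨rfl, rfl, heq_of_eq (List.ofFn_inj.1 hargs)⟩
  all_goals aesop

instance : Countable IFml := IFml.code_injective.countable

/-- `β` constrains a successor of `(a, os)`: a world `y` in variable `3`, the one bound by the
translations of `→` and `∀` at `x`, and an object `b` in `w_l`. -/
theorem RealizesCountableTypes.exists_succ {α : Model} (hα : RealizesCountableTypes α)
    (a : α.D) (os : List α.D) (β : Fml) (Pos Neg : Set IFml)
    (hfin : ∀ S T : Finset IFml, ↑S ⊆ Pos → ↑T ⊆ Neg → ∃ y b,
      β.eval α (update (assign α a (os ++ [b])) 3 y) ∧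
        (∀ i ∈ S, ISat α y (os ++ [b]) i) ∧ ∀ i ∈ T, ¬ ISat α y (os ++ [b]) i) :
    ∃ y b, β.eval α (update (assign α a (os ++ [b])) 3 y) ∧
      (∀ i ∈ Pos, ISat α y (os ++ [b]) i) ∧ ∀ i ∈ Neg, ¬ ISat α y (os ++ [b]) i := by
  have hoff : ∀ y b, ∀ v ∉ [3, 2 * os.length],
      update (assign α a (os ++ [b])) 3 y v = assign α a os v := fun y b v hv => by
    simp only [List.mem_cons, List.not_mem_nil, or_false, not_or] at hv
    rw [update_of_ne hv.1, assign_append, update_of_ne hv.2]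
  obtain ⟨g, hgV, hβ, he⟩ := hα.exists_forall (ι := Pos ⊕ Neg) (assign α a os)
    [3, 2 * os.length] β (Sum.elim (fun i => ST i.1 3) fun i => (ST i.1 3).neg) fun S => by
      obtain ⟨y, b, hβ, hS, hT⟩ := hfin (S.toLeft.map (.subtype _)) (S.toRight.map (.subtype _))
        (by simp) (by simp)
      refine ⟨_, hoff y b, hβ, ?_⟩
      rintro (i | i) hi
      · exact (eval_ST_update_three ..).2 (hS i.1 (by simpa using hi))
      · exact fun h => hT i.1 (by simpa using hi) ((eval_ST_update_three ..).1 h)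
  have hg : g = update (assign α a (os ++ [g (2 * os.length)])) 3 (g 3) := by
    funext v
    by_cases h3 : v = 3
    · subst h3; simp
    by_cases hl : v = 2 * os.length
    · subst hl; rw [update_of_ne h3, assign_append_length]
    rw [hgV v (by simp [h3, hl]), hoff _ _ v (by simp [h3, hl])]
  rw [hg] at hβ he
  exact ⟨g 3, g (2 * os.length), hβ,
    fun i hi => (eval_ST_update_three ..).1 (he (.inl ⟨i, hi⟩)),
    fun i hi => mt (eval_ST_update_three ..).2 (he (.inr ⟨i, hi⟩))⟩

/-! ### Inclusion of intuitionistic theories -/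

def ITheoryLe (φ : Fml) (α β : Model) (a : α.D) (os : List α.D) (c : β.D) (ds : List β.D) :
    Prop :=
  os.length = ds.length ∧ ∀ i, Admissible φ os.length i → ISat α a os i → ISat β c ds i

namespace ITheoryLe

variable {φ : Fml} {α β : Model} {a : α.D} {os : List α.D} {c : β.D} {ds : List β.D}

theorem atomSat_of_atomSat (h : ITheoryLe φ α β a os c ds) {P : Sym} (hP : P ∈ sigOf φ)
    (hR : P ≠ .R) (hE : P ≠ .E) (ha : atomSat α P a os) : atomSat β P c ds := by
  cases P with
  | R => exact absurd rfl hR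
  | E => exact absurd rfl hE
  | P n m =>
    obtain rfl : n = os.length := by have := ha.1; simp only [Sym.arity] at this; omega
    rw [atomSat_iff_iSat] at ha
    rw [h.1, atomSat_iff_iSat]
    exact h.1 ▸ h.2 _ (.atom hP) ha

theorem back (hα : RealizesCountableTypes α) (h : ITheoryLe φ α β a os c ds) {c' : β.D}
    (hc : relR β c c') :
    ∃ a', relR α a a' ∧ ITheoryLe φ β α c' ds a' os ∧ ITheoryLe φ α β a' os c' ds := by
  obtain ⟨y, b, hy, hPos, hNeg⟩ := hα.exists_succ a os (.atom .R ![1, 3])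
    {i | Admissible φ os.length i ∧ ISat β c' ds i}
    {i | Admissible φ os.length i ∧ ¬ ISat β c' ds i} fun S T hS hT => by
      -- otherwise `a` forces `⋀ S → ⋁ T`, hence so does `c`, and `c'` refutes it
      by_contra hno
      have hadm : Admissible φ os.length (.impl (iconj S) (idisj T)) :=
        (Admissible.iconj fun i hi => (hS hi).1).impl (Admissible.idisj fun i hi => (hT hi).1)
      have ha : ISat α a os (.impl (iconj S) (idisj T)) := iSat_impl.2 fun y hy hyS => by
        by_contra hyT
        refine hno ⟨y, a, by simpa using hy, fun i hi => ?_, fun i hi hyi => ?_⟩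
        · exact (iSat_append (hS hi).1.2).2 ((eval_ST_iconj ..).1 hyS i hi)
        · exact hyT ((eval_ST_idisj ..).2 ⟨i, hi, (iSat_append (hT hi).1.2).1 hyi⟩)
      obtain ⟨i, hi, hc'i⟩ := (eval_ST_idisj ..).1 (iSat_impl.1 (h.2 _ hadm ha) c' hc
        ((eval_ST_iconj ..).2 fun i hi => (hS hi).2))
      exact (hT hi).2 hc'i
  refine ⟨y, by simpa using hy, ⟨h.1.symm, fun i hi hc'i => ?_⟩, ⟨h.1, fun i hi hyi => ?_⟩⟩
  · rw [← h.1] at hi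
    exact (iSat_append hi.2).1 (hPos i ⟨hi, hc'i⟩)
  · by_contra hn
    exact hNeg i ⟨hi, hn⟩ ((iSat_append hi.2).2 hyi)

theorem exi (hβ : RealizesCountableTypes β) (h : ITheoryLe φ α β a os c ds) {b : α.D}
    (hb : relE α a b) : ∃ d, relE β c d ∧ ITheoryLe φ α β a (os ++ [b]) c (ds ++ [d]) := by
  -- the constraint `x = y` keeps the world fixed, so that only an object is added
  obtain ⟨y, d, hyd, hPos, -⟩ :=
    hβ.exists_succ c ds (.conj (.eq 1 3) (.atom .E ![3, 2 * ds.length]))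
    {i | Admissible φ (os.length + 1) i ∧ ISat α a (os ++ [b]) i} ∅ fun S T hS hT => by
      have hadm : Admissible φ os.length (.ex os.length (iconj S)) :=
        (Admissible.iconj fun i hi => (hS hi).1).ex
      have hc := h.2 _ hadm (iSat_ex.2 ⟨b, hb, (eval_ST_iconj ..).2 fun i hi => (hS hi).2⟩)
      rw [h.1, iSat_ex] at hc
      obtain ⟨d, hd, hcd⟩ := hc
      exact ⟨c, d, by simpa [Fml.eval, ↓eval_atom_E] using hd, (eval_ST_iconj ..).1 hcd,
        fun i hi => absurd (hT hi) id⟩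
  obtain ⟨rfl, hE⟩ : c = y ∧ relE β y d := by simpa [Fml.eval, ↓eval_atom_E] using hyd
  exact ⟨d, hE, by simp [h.1], fun i hi hai => hPos i ⟨by simpa using hi, hai⟩⟩

theorem uni (hα : RealizesCountableTypes α) (h : ITheoryLe φ α β a os c ds) {c' : β.D}
    {d' : β.D} (hc : relR β c c') (hd : relE β c' d') :
    ∃ a' b', relR α a a' ∧ relE α a' b' ∧ ITheoryLe φ α β a' (os ++ [b']) c' (ds ++ [d']) := by
  obtain ⟨y, b, hyb, -, hNeg⟩ := hα.exists_succ a os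
    (.conj (.atom .R ![1, 3]) (.atom .E ![3, 2 * os.length])) ∅
    {i | Admissible φ (os.length + 1) i ∧ ¬ ISat β c' (ds ++ [d']) i} fun S T hS hT => by
      by_contra hno
      have hadm : Admissible φ os.length (.all os.length (idisj T)) :=
        (Admissible.idisj fun i hi => (hT hi).1).all
      have ha : ISat α a os (.all os.length (idisj T)) := iSat_all.2 fun y b hy hb => by
        by_contra hyT
        exact hno ⟨y, b, by simpa [Fml.eval, ↓eval_atom_R, ↓eval_atom_E] using ⟨hy, hb⟩,
          fun i hi => absurd (hS hi) id, fun i hi hyi => hyT ((eval_ST_idisj ..).2 ⟨i, hi, hyi⟩)⟩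
      have hc' := h.2 _ hadm ha
      rw [h.1, iSat_all] at hc'
      obtain ⟨i, hi, hc'i⟩ := (eval_ST_idisj ..).1 (hc' c' d' hc hd)
      exact (hT hi).2 hc'i
  obtain ⟨hR, hE⟩ : relR α a y ∧ relE α y b := by
    simpa [Fml.eval, ↓eval_atom_R, ↓eval_atom_E] using hyb
  exact ⟨y, b, hR, hE, by simp [h.1], fun i hi hyi =>
    by_contra fun hn => hNeg i ⟨by simpa using hi, hn⟩ hyi⟩

end ITheoryLe

theorem isAsim_iTheoryLe (φ : Fml) {M N : Model} (hM : RealizesCountableTypes M)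
    (hN : RealizesCountableTypes N) :
    IsAsim (sigOf φ) M N fun s t => ITheoryLe φ (side M N s) (side M N t) := by
  have hside : ∀ s, RealizesCountableTypes (side M N s) := by rintro (_ | _) <;> assumption
  exact {
    lengths := fun _ _ _ _ _ _ h => h.1
    atoms := fun _ _ _ _ _ _ h _ hP hR hE => h.atomSat_of_atomSat hP hR hE
    back := fun s _ _ _ _ _ h _ hc => h.back (hside s) hc
    exi := fun _ t _ _ _ _ h _ hb => h.exi (hside t) hb
    uni := fun s _ _ _ _ _ h _ _ hc hd => h.uni (hside s) hc hd }

theorem exists_model_of_forall_IC {φ : Fml} {n : ℕ} {N : Model} {f : ℕ → N.D}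
    (hIC : ∀ ψ ∈ IC φ n, ψ.eval N f) : ∃ (M : Model) (g : ℕ → M.D), φ.eval M g ∧
      ∀ i, Admissible φ n i → (ST i 1).eval M g → (ST i 1).eval N f := by
  classical
  let T := {i | Admissible φ n i ∧ ¬ (ST i 1).eval N f}
  obtain ⟨M, g, hg⟩ := compactness (Γ := insert φ ((fun i => (ST i 1).neg) '' T)) fun S hS => by
    obtain ⟨T', hT', hT'S⟩ := Finset.subset_set_image_iff.1
      (show ↑(S.erase φ) ⊆ (fun i => (ST i 1).neg) '' T from fun ψ hψ => by
        simpa [(Finset.mem_erase.1 hψ).1] using hS (Finset.mem_of_mem_erase hψ))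
    by_contra hno
    have hadm : Admissible φ n (idisj T') := .idisj fun i hi => (hT' hi).1
    have hφ : EntailsF φ (ST (idisj T') 1) := fun M g hφ => by
      by_contra hd
      refine hno ⟨M, g, fun ψ hψ => ?_⟩
      by_cases hψφ : ψ = φ
      · exact hψφ ▸ hφ
      · obtain ⟨i, hi, rfl⟩ := Finset.mem_image.1 (hT'S ▸ Finset.mem_erase.2 ⟨hψφ, hψ⟩)
        exact fun hgi => hd ((eval_ST_idisj ..).2 ⟨i, hi, hgi⟩)
    obtain ⟨i, hi, hfi⟩ := (eval_ST_idisj ..).1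
      (hIC _ ⟨hadm.1 1, freeOK_ST hadm.2, ⟨_, rfl⟩, hφ⟩)
    exact (hT' hi).2 hfi
  exact ⟨M, g, hg φ (Set.mem_insert ..), fun i hi hgi => by_contra fun hn =>
    hg _ (Set.mem_insert_of_mem _ ⟨i, ⟨hi, hn⟩, rfl⟩) hgi⟩

theorem ITheoryLe.diag {ι : Type} (U : Ultrafilter ι) {φ : Fml} {n : ℕ} {M N : Model}
    {g : ℕ → M.D} {f : ℕ → N.D}
    (hle : ∀ i, Admissible φ n i → (ST i 1).eval M g → (ST i 1).eval N f) :
    ITheoryLe φ (UProd U fun _ => M) (UProd U fun _ => N) (diag U M (g 1))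
      ((objects g n).map (diag U M)) (diag U N (f 1)) ((objects f n).map (diag U N)) := by
  refine ⟨by simp [objects], fun i hi hMi => ?_⟩
  have hi : Admissible φ n i := by simpa [objects] using hi
  have hok := freeOK_ST hi.2
  rw [← sat_ST_iff_iSat hok (by simp [objects]), sat_diag_iff_eval U hok] at hMi ⊢
  exact hle i hi hMi

theorem IC_entails_general (φ : Fml) (n : ℕ) (hfree : FreeOK n φ)
    (hinv : AsimInvariant φ n) : EntailsSet (IC φ n) φ := by
  intro N f hIC
  obtain ⟨M, g, hφ, hle⟩ := exists_model_of_forall_IC hIC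
  let U := Filter.hyperfilter ℕ
  have hU : (U : Filter ℕ) ≤ .cofinite := Filter.hyperfilter_le_cofinite
  have hasim := isAsim_iTheoryLe φ (realizesCountableTypes_uprod hU fun _ => M)
    (realizesCountableTypes_uprod hU fun _ => N)
  exact (sat_diag_iff_eval U hfree f).1 (hinv _ subset_rfl _ _ _ _ _ _ (by simp [objects])
    (by simp [objects]) ⟨_, hasim, .diag U hle⟩ ((sat_diag_iff_eval U hfree g).2 hφ))

/-- for satisfiable, asimulation-invariant φ, the intuitionistic
consequences of φ entail φ. -/
theorem IC_entails (φ : Fml) (n : ℕ) (hfree : FreeOK n φ) (hsat : Satisfiable φ)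
    (hinv : AsimInvariant φ n) : EntailsSet (IC φ n) φ :=
  IC_entails_general φ n hfree hinv

end IPC
end
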